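/- arXiv:2201.08681 — 5 statements merged into one kernel-verified Lean document; each statement's English description precedes it below -/
import Mathlib

section
/- Let κ be an infinite cardinal and assume 2^κ = κ⁺ (an instance of GCH). Then Breaker has a winning strategy in the Maker-Breaker game MB(K_{κ⁺}, K_{κ,κ⁺}), i.e. Breaker can ensure that at the end of the game the graph formed by Maker's edges contains no copy of the complete bipartite graph K_{κ,κ⁺}. -/
open Cardinal

universe u v

/-- A strategy in a transfinite positional game with moves of type `α`:
given the current turn (an ordinal) and the history of all moves made at
earlier turns, it produces a move. -/
def MBStrategy (α : Type u) : Type (u + 1) :=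
  ∀ γ : Ordinal.{u}, (∀ β : Ordinal.{u}, β < γ → α) → α

/-- A completed play of a transfinite positional game on the board `board`:
an ordinal-indexed sequence of moves, each an element of the board that was not
claimed at any earlier turn, which goes on until every element of the board has
been claimed. -/
structure MBPlay {α : Type u} (board : Set α) : Type (u + 1) where
  len : Ordinal.{u}
  move : ∀ γ : Ordinal.{u}, γ < len → α
  move_mem : ∀ γ h, move γ h ∈ board
  move_inj : ∀ γ₁ h₁ γ₂ h₂, move γ₁ h₁ = move γ₂ h₂ → γ₁ = γ₂
  complete : ∀ e ∈ board, ∃ γ h, move γ h = e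

namespace MBPlay

variable {α : Type u} {board : Set α}

/-- The set of board elements claimed at the turns satisfying `turns`. -/
def claimed (p : MBPlay board) (turns : Ordinal.{u} → Prop) : Set α :=
  {e | ∃ γ h, turns γ ∧ p.move γ h = e}

/-- The play is consistent with the player moving at the turns satisfying
`turns` using the strategy `σ`. -/
def Follows (p : MBPlay board) (turns : Ordinal.{u} → Prop) (σ : MBStrategy α) : Prop :=
  ∀ γ h, turns γ → p.move γ h = σ γ (fun β hβ => p.move β (hβ.trans h))

end MBPlay

/-- In the Maker–Breaker game the moves alternate with Maker moving first: the
turn `γ` belongs to Maker iff `γ % 2 = 0`.  In particular turn `0` and all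
limit turns belong to Maker, and Breaker answers Maker's preceding move. -/
def makerTurn (γ : Ordinal.{u}) : Prop := γ % 2 = 0

/-- The turns on which Breaker moves in the Maker–Breaker game. -/
def breakerTurn (γ : Ordinal.{u}) : Prop := γ % 2 = 1

/-- A strategy is legal for the player moving at the turns satisfying `turns`
if at every position (arising at such a turn) in which some element of the
board is still unclaimed, it produces an unclaimed element of the board. -/
def MBStrategy.IsLegal {α : Type u} (σ : MBStrategy α) (board : Set α)
    (turns : Ordinal.{u} → Prop) : Prop :=
  ∀ (γ : Ordinal.{u}) (hist : ∀ β : Ordinal.{u}, β < γ → α), turns γ →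
    (∀ β h, hist β h ∈ board) →
    (∀ β₁ h₁ β₂ h₂, hist β₁ h₁ = hist β₂ h₂ → β₁ = β₂) →
    (∃ e ∈ board, ∀ β h, hist β h ≠ e) →
    σ γ hist ∈ board ∧ ∀ β h, hist β h ≠ σ γ hist

/-- `G` contains a copy of `H`, i.e. a subgraph isomorphic to `H`; equivalently
there is an injective graph homomorphism from `H` into `G`. -/
def ContainsCopy {V : Type u} {W : Type v} (G : SimpleGraph V) (H : SimpleGraph W) : Prop :=
  ∃ f : H →g G, Function.Injective f

/-- Maker has a winning strategy in the Maker–Breaker game `MB(G, H)`: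
playing at the even turns (including turn `0` and all limit turns) of a
transfinite play on the edge set of `G`, she can ensure that whatever Breaker
does at the odd turns, at the end of the play the graph formed by her claimed
edges contains a copy of `H`. -/
def MakerWins {V : Type u} {W : Type v} (G : SimpleGraph V) (H : SimpleGraph W) : Prop :=
  ∃ σ : MBStrategy (Sym2 V), σ.IsLegal G.edgeSet makerTurn ∧
    ∀ p : MBPlay G.edgeSet, p.Follows makerTurn σ →
      ContainsCopy (SimpleGraph.fromEdgeSet (p.claimed makerTurn)) H

/-- Breaker has a winning strategy in the Maker–Breaker game `MB(G, H)`: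
playing at the odd turns of a transfinite play on the edge set of `G`, he can
ensure that at the end of the play the graph formed by Maker's claimed edges
does not contain a copy of `H`. -/
def BreakerWins {V : Type u} {W : Type v} (G : SimpleGraph V) (H : SimpleGraph W) : Prop :=
  ∃ σ : MBStrategy (Sym2 V), σ.IsLegal G.edgeSet breakerTurn ∧
    ∀ p : MBPlay G.edgeSet, p.Follows breakerTurn σ →
      ¬ ContainsCopy (SimpleGraph.fromEdgeSet (p.claimed makerTurn)) H

/-! Well-order the vertices in type `κ⁺`, so that every vertex has at most `κ` predecessors.
As `2 ^ κ = κ⁺`, there are only `κ⁺` sets of size `κ`; list them as tasks `A i` indexed by the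
vertices. At a vertex `w` the tasks `A i ⊆ Iio w` with `i < w` are at most `κ` many, and they get
priorities in `κ.ord.ToType`, where every element has fewer than `κ` predecessors. Whenever Maker
claims an edge with higher endpoint `w`, Breaker claims an edge from `w` into the task open at `w`
of least priority. If Maker joins `w` to all of a task `A i` below it, Breaker never blocks `i`,
so each of her edges from `w` into `A i` but the last is answered by blocking a different task of
smaller priority; hence `#(A i) < κ`. So a `κ`-set is joined only to the at most `κ` vertices
below some bound, too few for the side of size `κ⁺` of `K_{κ,κ⁺}`. -/

open Set

lemma breakerTurn_add_one {γ : Ordinal.{u}} (h : makerTurn γ) : breakerTurn (γ + 1) := by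
  unfold makerTurn at h
  unfold breakerTurn
  rw [← Ordinal.div_add_mod γ 2, h, add_zero, Ordinal.mul_add_mod_self]
  exact Ordinal.mod_eq_of_lt one_lt_two

lemma not_breakerTurn_of_makerTurn {γ : Ordinal.{u}} (h : makerTurn γ) : ¬ breakerTurn γ :=
  fun h' => zero_ne_one (h.symm.trans h')

namespace Cardinal

lemma exists_mem_forall_lt_of_mk_Iio_le {V : Type u} [LinearOrder V] {κ : Cardinal.{u}}
    (hκ : ℵ₀ ≤ κ) (hIio : ∀ x : V, #(Iio x) ≤ κ) {S U : Set V} (hS : #S ≤ κ) (hU : κ < #U) :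
    ∃ w ∈ U, ∀ x ∈ S, x < w := by
  by_contra! hcon
  have hIic : ∀ x : V, #(Iic x) ≤ κ := fun x => by
    rw [← Iio_insert]
    exact mk_insert_le.trans ((add_le_add_left (hIio x) 1).trans (add_one_eq hκ).le)
  have hsub : U ⊆ ⋃ x ∈ S, Iic x := fun w hw => by
    obtain ⟨x, hx, hwx⟩ := hcon w hw
    exact mem_biUnion hx hwx
  have : #U ≤ κ := calc
    #U ≤ #(⋃ x ∈ S, Iic x) := mk_le_mk_of_subset hsub
    _ ≤ #S * ⨆ x : S, #(Iic x.1) := mk_biUnion_le _ _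
    _ ≤ κ * κ := mul_le_mul' hS (ciSup_le' fun x => hIic x)
    _ = κ := mul_eq_self hκ
  exact this.not_gt hU

lemma exists_setOf_mk_le_subset_range {V : Type u} {κ : Cardinal.{u}} (hκ : ℵ₀ ≤ κ)
    (hGCH : 2 ^ κ = Order.succ κ) (hV : #V = Order.succ κ) :
    ∃ A : V → Set V, {S : Set V | #S ≤ κ} ⊆ range A := by
  have hcard : #{S : Set V // #S ≤ κ} ≤ #V := calc
    #{S : Set V // #S ≤ κ} ≤ max #V ℵ₀ ^ κ := mk_bounded_set_le V κ
    _ = (2 ^ κ) ^ κ := by rw [hV, max_eq_left (hκ.trans (Order.le_succ κ)), hGCH]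
    _ = #V := by rw [← power_mul, mul_eq_self hκ, hGCH, hV]
  have : Nonempty V := mk_ne_zero_iff.mp (by rw [hV]; exact Order.succ_ne_bot κ)
  obtain ⟨A, hA⟩ := Function.exists_surjective_iff.mpr
    ⟨⟨fun _ => ⟨∅, by simp⟩⟩, (le_def _ _).mp hcard⟩
  exact ⟨fun i => (A i).1, fun S hS => (hA ⟨S, hS⟩).imp fun i h => congrArg Subtype.val h⟩

lemma mk_le_mk_setOf_exists_lt_add_one {ι : Type u} {β : Type*} [LinearOrder β] {φ : ι → β}
    (hφ : Function.Injective φ) : #ι ≤ #{a | ∃ b, φ a < φ b} + 1 := by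
  have hmax : ({a | ∃ b, φ a < φ b}ᶜ : Set ι).Subsingleton := by
    intro a ha b hb
    simp only [mem_compl_iff, mem_ofPred_eq, not_exists, not_lt] at ha hb
    exact hφ ((hb a).antisymm (ha b))
  rw [← mk_sum_compl {a | ∃ b, φ a < φ b}]
  exact add_le_add_right hmax.cardinalMk_le_one _

end Cardinal

section History

variable {α : Type u}

def historyClaimed {γ : Ordinal.{u}} (hist : ∀ β < γ, α) (turns : Ordinal.{u} → Prop) : Set α :=
  {e | ∃ β h, turns β ∧ hist β h = e}

def MBPlay.history {board : Set α} (p : MBPlay board) {γ : Ordinal.{u}} (h : γ ≤ p.len) :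
    ∀ β < γ, α :=
  fun β hβ => p.move β (hβ.trans_le h)

lemma MBPlay.mem_historyClaimed_history {board : Set α} (p : MBPlay board)
    {γ : Ordinal.{u}} (h : γ ≤ p.len) (turns : Ordinal.{u} → Prop) (e : α) :
    e ∈ historyClaimed (p.history h) turns ↔ ∃ β hβ, β < γ ∧ turns β ∧ p.move β hβ = e :=
  ⟨fun ⟨β, hβ, ht, he⟩ => ⟨β, hβ.trans_le h, hβ, ht, he⟩,
    fun ⟨β, _, hβ, ht, he⟩ => ⟨β, hβ, ht, he⟩⟩

lemma MBPlay.move_congr {board : Set α} (p : MBPlay board) {γ δ : Ordinal.{u}} (h : γ = δ)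
    (hγ : γ < p.len) (hδ : δ < p.len) : p.move γ hγ = p.move δ hδ := by
  subst h; rfl

end History

section BlockingStrategy

variable {V : Type u} [LinearOrder V] {T : Type u} [LinearOrder T] [WellFoundedLT T]

def IsOpenTask (A : V → Set V) {γ : Ordinal.{u}} (hist : ∀ β < γ, Sym2 V) (w α : V) : Prop :=
  α < w ∧ A α ⊆ Iio w ∧ (∃ a ∈ A α, s(w, a) ∉ historyClaimed hist fun _ => True) ∧
    ∀ a ∈ A α, s(w, a) ∉ historyClaimed hist breakerTurn

open Classical in
noncomputable def blockingMove (A : V → Set V) (E : V → V → T) {γ : Ordinal.{u}}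
    (hist : ∀ β < γ, Sym2 V) (w : V) (fallback : Sym2 V) : Sym2 V :=
  if h : {α | IsOpenTask A hist w α}.Nonempty then
    s(w, (Function.argminOn_mem (E w) _ h).2.2.1.choose)
  else fallback

/-- At a successor turn Breaker answers Maker's last edge, whose higher endpoint is `w`, by
blocking the task open at `w` of least priority `E w`. -/
noncomputable def blockingStrategy [Nonempty V] (A : V → Set V) (E : V → V → T) :
    MBStrategy (Sym2 V) := fun γ hist =>
  haveI : Nonempty (Sym2 V) := .map (fun v => s(v, v)) ‹_›
  let fallback := Classical.epsilon fun e =>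
    e ∈ (⊤ : SimpleGraph V).edgeSet ∧ e ∉ historyClaimed hist fun _ => True
  if h : Ordinal.pred γ < γ then blockingMove A E hist (hist _ h).sup fallback else fallback

lemma blockingMove_spec (A : V → Set V) (E : V → V → T) {γ : Ordinal.{u}}
    {hist : ∀ β < γ, Sym2 V} {w i : V} (hi : IsOpenTask A hist w i) (fallback : Sym2 V) :
    ∃ α, IsOpenTask A hist w α ∧ ¬ E w i < E w α ∧
      ∃ a ∈ A α, blockingMove A E hist w fallback = s(w, a) := by
  have h : {α | IsOpenTask A hist w α}.Nonempty := ⟨i, hi⟩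
  have hα := Function.argminOn_mem (E w) _ h
  refine ⟨_, hα, Function.not_lt_argminOn (E w) _ hi, _, hα.2.2.1.choose_spec.1, ?_⟩
  rw [blockingMove, dif_pos h]

lemma blockingStrategy_isLegal [Nonempty V] (A : V → Set V) (E : V → V → T) :
    (blockingStrategy A E).IsLegal (⊤ : SimpleGraph V).edgeSet breakerTurn := by
  intro γ hist _ _ _ ⟨e, he, hfree⟩
  suffices h : ∀ e', e' ∈ (⊤ : SimpleGraph V).edgeSet ∧ e' ∉ historyClaimed hist (fun _ => True) →
      e' ∈ (⊤ : SimpleGraph V).edgeSet ∧ ∀ β h, hist β h ≠ e' by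
    have hfallback := Classical.epsilon_spec (p := fun e =>
      e ∈ (⊤ : SimpleGraph V).edgeSet ∧ e ∉ historyClaimed hist fun _ => True)
      ⟨e, he, fun ⟨β, hβ, _, he'⟩ => hfree β hβ he'⟩
    simp only [blockingStrategy]
    split_ifs
    · unfold blockingMove
      split_ifs with hopen
      · obtain ⟨-, hbelow, hfree', -⟩ := Function.argminOn_mem (E _) _ hopen
        obtain ⟨ha, hunclaimed⟩ := hfree'.choose_spec
        exact h _ ⟨(hbelow ha).ne', hunclaimed⟩
      · exact h _ hfallback
    · exact h _ hfallback
  exact fun e' ⟨he', hfree'⟩ => ⟨he', fun β hβ heq => hfree' ⟨β, hβ, trivial, heq⟩⟩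

variable [Nonempty V] {A : V → Set V} {E : V → V → T} {p : MBPlay (⊤ : SimpleGraph V).edgeSet}

lemma exists_blockingMove_eq_move_add_one (hp : p.Follows breakerTurn (blockingStrategy A E))
    {γ : Ordinal.{u}} (hγ : makerTurn γ) (h : γ + 1 < p.len) {w : V}
    (hw : (p.move γ ((lt_add_one γ).trans h)).sup = w) :
    ∃ fallback, p.move (γ + 1) h = blockingMove A E (p.history h.le) w fallback := by
  have hpred : Ordinal.pred (γ + 1) < γ + 1 := by
    rw [Ordinal.pred_add_one]; exact lt_add_one γ
  have hlast : (p.history h.le _ hpred).sup = w := by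
    rw [← hw, MBPlay.history, p.move_congr (Ordinal.pred_add_one γ)]
  rw [hp _ h (breakerTurn_add_one hγ)]
  exact ⟨_, (dif_pos hpred).trans (congrArg (blockingMove A E _ · _) hlast)⟩

lemma exists_isOpenTask_move_add_one (hp : p.Follows breakerTurn (blockingStrategy A E))
    {w i : V} (hi : i < w) (hAi : A i ⊆ Iio w) (hE : InjOn (E w) (Iio w))
    (hunblocked : ∀ x ∈ A i, s(w, x) ∉ p.claimed breakerTurn) {γ δ : Ordinal.{u}}
    (hγ : makerTurn γ) (hγδ : γ < δ) (hδ : δ < p.len) {a b : V} (ha : a ∈ A i) (hb : b ∈ A i)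
    (hγa : p.move γ (hγδ.trans hδ) = s(w, a)) (hδb : p.move δ hδ = s(w, b)) :
    ∃ α, IsOpenTask A (p.history ((Order.add_one_le_of_lt hγδ).trans hδ.le)) w α ∧
      E w α < E w i ∧
      ∃ a' ∈ A α, p.move (γ + 1) ((Order.add_one_le_of_lt hγδ).trans_lt hδ) = s(w, a') := by
  have hlt : γ + 1 < p.len := (Order.add_one_le_of_lt hγδ).trans_lt hδ
  have hopen : IsOpenTask A (p.history hlt.le) w i := by
    refine ⟨hi, hAi, ⟨b, hb, ?_⟩, fun x hx hx' => hunblocked x hx ?_⟩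
    · rw [p.mem_historyClaimed_history]
      rintro ⟨β, hβ, hβγ, -, hβb⟩
      obtain rfl := p.move_inj _ _ _ _ (hβb.trans hδb.symm)
      exact (Order.add_one_le_of_lt hγδ).not_gt hβγ
    · obtain ⟨β, hβ, -, hβB, hβx⟩ := (p.mem_historyClaimed_history _ _ _).mp hx'
      exact ⟨β, hβ, hβB, hβx⟩
  have hw : (p.move γ ((lt_add_one γ).trans hlt)).sup = w := by
    rw [hγa, Sym2.sup_mk]; exact sup_eq_left.mpr (hAi ha).le
  obtain ⟨fallback, hmove⟩ := exists_blockingMove_eq_move_add_one hp hγ hlt hw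
  obtain ⟨α, hα, hαi, a', ha', hblock⟩ := blockingMove_spec A E hopen fallback
  have hαne : α ≠ i := by
    rintro rfl
    exact hunblocked a' ha' ⟨γ + 1, hlt, breakerTurn_add_one hγ, hmove.trans hblock⟩
  refine ⟨α, hα, lt_of_le_of_ne (not_lt.mp hαi) ?_, a', ha', hmove.trans hblock⟩
  exact fun hEq => hαne (hE hα.1 hi hEq)

theorem mk_le_mk_Iio_add_one_of_forall_makerClaimed
    (hp : p.Follows breakerTurn (blockingStrategy A E)) {w i : V} (hi : i < w)
    (hAi : A i ⊆ Iio w) (hE : InjOn (E w) (Iio w))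
    (hjoin : ∀ a ∈ A i, s(w, a) ∈ p.claimed makerTurn) :
    #(A i) ≤ #(Iio (E w i)) + 1 := by
  have hunblocked : ∀ x ∈ A i, s(w, x) ∉ p.claimed breakerTurn := by
    rintro x hx ⟨β, hβ, hβB, hβx⟩
    obtain ⟨γ, hγ, hγM, hγx⟩ := hjoin x hx
    exact not_breakerTurn_of_makerTurn hγM (p.move_inj _ _ _ _ (hβx.trans hγx.symm) ▸ hβB)
  choose φ hφ hφM hφe using fun a : A i => hjoin a.1 a.2
  have hφinj : Function.Injective φ := fun a b hab =>
    Subtype.ext (Sym2.congr_right.mp ((hφe a).symm.trans ((p.move_congr hab _ _).trans (hφe b))))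
  choose Λ hΛopen hΛlt a' ha' hΛmove using fun a : {a // ∃ b, φ a < φ b} =>
    exists_isOpenTask_move_add_one hp hi hAi hE hunblocked (hφM a.1) a.2.choose_spec (hφ _)
      a.1.2 a.2.choose.2 (hφe _) (hφe _)
  have hΛ : ∀ a b, Λ a = Λ b → ¬ φ a.1 < φ b.1 := fun a b hab hlt =>
    (hΛopen b).2.2.2 _ (hab ▸ ha' a) ((p.mem_historyClaimed_history _ _ _).mpr
      ⟨φ a.1 + 1, _, by simpa using hlt, breakerTurn_add_one (hφM _), hΛmove a⟩)
  have hΛinj : Function.Injective fun a : {a // ∃ b, φ a < φ b} =>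
      (⟨E w (Λ a), hΛlt a⟩ : Iio (E w i)) := by
    intro a b hab
    have hab' : Λ a = Λ b := hE (hΛopen a).1 (hΛopen b).1 (congrArg Subtype.val hab)
    rcases lt_trichotomy (φ a.1) (φ b.1) with hlt | heq | hgt
    · exact (hΛ a b hab' hlt).elim
    · exact Subtype.ext (hφinj heq)
    · exact (hΛ b a hab'.symm hgt).elim
  exact (mk_le_mk_setOf_exists_lt_add_one hφinj).trans
    (add_le_add_left (mk_le_of_injective hΛinj) 1)

end BlockingStrategy

/-- Let `κ` be an infinite cardinal with `2 ^ κ = κ⁺` (an instance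
of GCH).  Then Breaker has a winning strategy in the Maker–Breaker game
`MB(K_{κ⁺}, K_{κ,κ⁺})`: on the complete graph on `κ⁺` vertices he can ensure
that Maker's graph contains no copy of the complete bipartite graph with
classes of sizes `κ` and `κ⁺`. -/
theorem breakerWins_complete_succ_vs_completeBipartite
    (κ : Cardinal.{u}) (hκ : ℵ₀ ≤ κ) (hGCH : 2 ^ κ = Order.succ κ)
    (V A B : Type u) (hV : #V = Order.succ κ) (hA : #A = κ) (hB : #B = Order.succ κ) :
    BreakerWins (⊤ : SimpleGraph V) (completeBipartiteGraph A B) := by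
  obtain ⟨_, _, hord⟩ := exists_ord_eq_type_lt V
  have hIio : ∀ x : V, #(Iio x) ≤ κ := fun x => Order.lt_succ_iff.mp (hV ▸ mk_Iio_lt x hord)
  have : Nonempty V := mk_ne_zero_iff.mp (by rw [hV]; exact Order.succ_ne_bot κ)
  obtain ⟨tasks, htasks⟩ := exists_setOf_mk_le_subset_range hκ hGCH hV
  have hT : ∀ t : κ.ord.ToType, #(Iio t) < κ := fun t => by simpa using mk_Iio_lt t
  have : Nonempty κ.ord.ToType := by simpa using (aleph0_pos.trans_le hκ).ne'
  choose E hE using fun w : V => exists_injOn_iff_injective (β := κ.ord.ToType).mpr <|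
    ((le_def _ _).mp ((hIio w).trans (by rw [mk_toType, card_ord]))).elim
      fun e => ⟨e, e.injective⟩
  refine ⟨blockingStrategy tasks E, blockingStrategy_isLegal tasks E, fun p hp ⟨f, hf⟩ => ?_⟩
  have hS : #(range (f ∘ Sum.inl)) = κ := by rw [mk_range_eq _ (hf.comp Sum.inl_injective), hA]
  obtain ⟨i, hi⟩ := htasks hS.le
  obtain ⟨_, ⟨y, rfl⟩, hy⟩ := exists_mem_forall_lt_of_mk_Iio_le hκ hIio
    (S := insert i (tasks i)) (U := range (f ∘ Sum.inr))
    (mk_insert_le.trans (by rw [hi, hS, add_one_eq hκ]))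
    (by rw [mk_range_eq _ (hf.comp Sum.inr_injective), hB]; exact Order.lt_succ κ)
  have hjoin : ∀ a ∈ tasks i, s(f (.inr y), a) ∈ p.claimed makerTurn := by
    rw [hi]
    rintro _ ⟨x, rfl⟩
    exact (f.map_adj (by simp : (completeBipartiteGraph A B).Adj (.inr y) (.inl x))).1
  have hsmall := mk_le_mk_Iio_add_one_of_forall_makerClaimed hp (hy i (mem_insert _ _))
    (fun a ha => hy a (mem_insert_of_mem _ ha)) (hE _) hjoin
  rw [hi, hS] at hsmall
  exact hsmall.not_gt (add_lt_of_lt hκ (hT _) (one_lt_aleph0.trans_le hκ))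
end

section
/- Let κ be an infinite cardinal and assume 2^κ = κ⁺ (an instance of GCH). Then there exists a 2-colouring of the edge set of the complete bipartite graph K_{κ,κ⁺} such that no colour class contains a copy of K_{κ,κ⁺}. -/
open Cardinal

universe u v

/-- The graph formed by the edges of `G` that receive colour `i` under the
edge-colouring `c`. -/
def colourClass {V : Type u} (G : SimpleGraph V) (c : G.edgeSet → Bool) (i : Bool) :
    SimpleGraph V :=
  SimpleGraph.fromEdgeSet {e : Sym2 V | ∃ h : e ∈ G.edgeSet, c ⟨e, h⟩ = i}

/-! Under `2 ^ κ = κ⁺` the subsets of `A` can be listed in order type `κ⁺`, which is also the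
order type of `B`. Colour the column of `b ∈ B` so that it is non-constant on each of the at most
`κ` subsets of `A` of size `κ` listed before `b`: such a family has pairwise distinct
representatives, two for each set, chosen by transfinite recursion. A monochromatic copy of
`K_{κ,κ⁺}` must keep its two sides apart (as `κ < κ⁺`), so it yields a monochromatic rectangle
`A' × B'` with `#A' = κ` and `#B' = κ⁺`; but `A'` is listed before some `b ∈ B'`, whose column is
not constant on `A'`. -/

theorem exists_injective_forall_mem {κ : Cardinal.{u}} {J A : Type u} (hJ : #J ≤ κ)
    (T : J → Set A) (hT : ∀ j, κ ≤ #(T j)) :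
    ∃ p : J → A, Function.Injective p ∧ ∀ j, p j ∈ T j := by
  -- order `J` inside `κ.ord.ToType`, so that every `j` has fewer than `κ` predecessors
  obtain ⟨ι⟩ : Nonempty (J ↪ κ.ord.ToType) := by rwa [← le_def, mk_ord_toType]
  let r : J → J → Prop := InvImage (· < ·) ι
  have hr : WellFounded r := InvImage.wf ι wellFounded_lt
  have fresh : ∀ j (prev : ∀ k, r k j → A), ∃ a ∈ T j, ∀ k (hk : r k j), prev k hk ≠ a := by
    intro j prev
    have hpred : #{k // r k j} < κ := by
      refine (mk_le_of_injective (f := fun k : {k // r k j} => (⟨ι k, k.2⟩ : Set.Iio (ι j)))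
        fun k l h => Subtype.ext (ι.injective (congrArg Subtype.val h))).trans_lt ?_
      exact (mk_Iio_lt (ι j) (by simp)).trans_eq (mk_ord_toType κ)
    have hsmall : #(Set.range fun k : {k // r k j} => prev k k.2) < #(T j) :=
      (mk_range_le.trans_lt hpred).trans_le (hT j)
    obtain ⟨a, ha, hfresh⟩ := Set.not_subset.1 fun h => (mk_le_mk_of_subset h).not_gt hsmall
    exact ⟨a, ha, fun k hk h => hfresh ⟨⟨k, hk⟩, h⟩⟩
  choose step hstep using fresh
  let p := hr.fix step
  have hp : ∀ j, p j = step j fun k _ => p k := hr.fix_eq step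
  refine ⟨p, fun j k hjk => ?_, fun j => hp j ▸ (hstep j _).1⟩
  by_contra hne
  rcases lt_or_gt_of_ne (ι.injective.ne hne) with h | h
  · exact (hstep k fun l _ => p l).2 j h (hjk.trans (hp k))
  · exact (hstep j fun l _ => p l).2 k h (hjk.symm.trans (hp j))

theorem exists_bool_nonconstant_on_family {κ : Cardinal.{u}} (hκ : ℵ₀ ≤ κ) {I A : Type u}
    (hI : #I ≤ κ) (S : I → Set A) (hS : ∀ i, κ ≤ #(S i)) :
    ∃ f : A → Bool, ∀ i, ∃ x ∈ S i, ∃ y ∈ S i, f x ≠ f y := by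
  classical
  obtain ⟨p, hp, hpS⟩ := exists_injective_forall_mem (J := I ⊕ I)
    (by simpa using add_le_of_le hκ hI hI) (fun j => S (j.elim id id)) fun j => hS _
  refine ⟨fun a => decide (a ∈ Set.range (p ∘ Sum.inl)),
    fun i => ⟨p (.inl i), hpS (.inl i), p (.inr i), hpS (.inr i), ?_⟩⟩
  simp [hp.eq_iff]

theorem exists_colouring_no_monochromatic_rectangle {κ : Cardinal.{u}} (hκ : ℵ₀ ≤ κ)
    (hGCH : 2 ^ κ ≤ Order.succ κ) {A B : Type u} (hA : #A ≤ κ) (hB : #B ≤ Order.succ κ) :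
    ∃ c : A → B → Bool, ∀ A' : Set A, κ ≤ #A' → ∀ B' : Set B, Order.succ κ ≤ #B' →
      ∃ b ∈ B', ∃ a₁ ∈ A', ∃ a₂ ∈ A', c a₁ b ≠ c a₂ b := by
  let β := (Order.succ κ).ord.ToType
  have hβ : #β = Order.succ κ := mk_ord_toType _
  have hIic : ∀ x : β, #(Set.Iic x) ≤ κ := fun x => Order.lt_succ_iff.1 <|
    (mk_Iic_lt x (by simp [β]) (hβ ▸ hκ.trans (Order.le_succ κ))).trans_eq hβ
  obtain ⟨ψ⟩ : Nonempty (B ↪ β) := by rwa [← le_def, hβ]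
  obtain ⟨e⟩ : Nonempty (Set A ↪ β) := by
    rw [← le_def, hβ, mk_set]
    exact (power_le_power_left two_ne_zero hA).trans hGCH
  have hcol : ∀ b : B, ∃ f : A → Bool, ∀ A' : {A' : Set A // e A' < ψ b ∧ κ ≤ #A'},
      ∃ x ∈ A'.1, ∃ y ∈ A'.1, f x ≠ f y := fun b =>
    exists_bool_nonconstant_on_family hκ
      ((mk_le_of_injective (f := fun A' => (⟨e A'.1, A'.2.1.le⟩ : Set.Iic (ψ b)))
        fun A₁ A₂ h => Subtype.ext (e.injective (congrArg Subtype.val h))).trans (hIic _))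
      Subtype.val fun A' => A'.2.2
  choose f hf using hcol
  refine ⟨fun a b => f b a, fun A' hA' B' hB' => ?_⟩
  obtain ⟨b, hb, hlt⟩ : ∃ b ∈ B', e A' < ψ b := by
    by_contra! hbdd
    have : #B' ≤ κ :=
      (mk_le_of_injective (f := fun b : B' => (⟨ψ b, hbdd b b.2⟩ : Set.Iic (e A')))
        fun b₁ b₂ h => Subtype.ext (ψ.injective (congrArg Subtype.val h))).trans (hIic _)
    exact (Order.lt_succ κ).not_ge (hB'.trans this)
  exact ⟨b, hb, hf b ⟨A', hlt, hA'⟩⟩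

namespace SimpleGraph

variable {A B C D : Type u}

theorem Hom.isLeft_inl_eq_not_isLeft_inr
    (F : completeBipartiteGraph A B →g completeBipartiteGraph C D) (a : A) (b : B) :
    (F (.inl a)).isLeft = !(F (.inr b)).isLeft := by
  have hadj := F.map_adj (show (completeBipartiteGraph A B).Adj (.inl a) (.inr b) by simp)
  revert hadj
  cases F (.inl a) <;> cases F (.inr b) <;> simp

theorem Hom.exists_injective_eq_sumMap
    (F : completeBipartiteGraph A B →g completeBipartiteGraph C D) (hF : Function.Injective F)
    [Nonempty A] (hCB : #C < #B) :
    ∃ g : A → C, ∃ h : B → D, Function.Injective g ∧ Function.Injective h ∧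
      ⇑F = Sum.map g h := by
  obtain ⟨a₀⟩ := ‹Nonempty A›
  by_cases hside : (F (.inl a₀)).isLeft
  · have hl : ∀ a, ∃ c, F (.inl a) = .inl c := fun a => by
      obtain ⟨b⟩ : Nonempty B := mk_ne_zero_iff.1 (pos_of_gt hCB).ne'
      rw [← Sum.isLeft_iff, F.isLeft_inl_eq_not_isLeft_inr a b,
        ← F.isLeft_inl_eq_not_isLeft_inr a₀ b, hside]
    have hr : ∀ b, ∃ d, F (.inr b) = .inr d := fun b => by
      rw [← Sum.isRight_iff, ← Sum.not_isLeft]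
      simpa [hside] using F.isLeft_inl_eq_not_isLeft_inr a₀ b
    choose g hg using hl
    choose h hh using hr
    refine ⟨g, h, fun a₁ a₂ e => ?_, fun b₁ b₂ e => ?_, funext (Sum.forall.2 ⟨hg, hh⟩)⟩
    · exact Sum.inl_injective (hF (by rw [hg, hg, e]))
    · exact Sum.inr_injective (hF (by rw [hh, hh, e]))
  · have hl : ∀ b, ∃ c, F (.inr b) = .inl c := fun b => by
      rw [← Sum.isLeft_iff]
      simpa [hside] using F.isLeft_inl_eq_not_isLeft_inr a₀ b
    choose g hg using hl
    exact absurd (mk_le_of_injective (f := g) fun b₁ b₂ e =>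
      Sum.inr_injective (hF (by rw [hg, hg, e])) : #B ≤ #C) hCB.not_ge

end SimpleGraph

def bipartiteEdgeColouring {A B : Type u} (c : A → B → Bool) :
    (completeBipartiteGraph A B).edgeSet → Bool := fun e =>
  Sym2.lift ⟨fun x y => match x, y with
    | .inl a, .inr b => c a b
    | .inr b, .inl a => c a b
    | _, _ => false,
   fun x y => by cases x <;> cases y <;> rfl⟩ e.1

theorem colourClass_le {V : Type u} (G : SimpleGraph V) (c : G.edgeSet → Bool) (i : Bool) :
    colourClass G c i ≤ G := fun x y hxy => by
  obtain ⟨⟨hxy, -⟩, -⟩ := (SimpleGraph.fromEdgeSet_adj _).1 hxy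
  exact hxy

theorem colourClass_bipartiteEdgeColouring_adj {A B : Type u} (c : A → B → Bool) (i : Bool)
    (a : A) (b : B) :
    (colourClass (completeBipartiteGraph A B) (bipartiteEdgeColouring c) i).Adj
      (.inl a) (.inr b) ↔ c a b = i := by
  simp [colourClass, bipartiteEdgeColouring]

/-- Let `κ` be an infinite cardinal with `2 ^ κ = κ⁺` (an
instance of GCH).  Then there is a `2`-colouring of the edge set of the
complete bipartite graph `K_{κ,κ⁺}` such that no colour class contains a copy
of `K_{κ,κ⁺}`. -/
theorem exists_colouring_no_monochromatic_completeBipartite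
    (κ : Cardinal.{u}) (hκ : ℵ₀ ≤ κ) (hGCH : 2 ^ κ = Order.succ κ)
    (A B : Type u) (hA : #A = κ) (hB : #B = Order.succ κ) :
    ∃ c : (completeBipartiteGraph A B).edgeSet → Bool,
      ∀ i : Bool,
        ¬ ContainsCopy (colourClass (completeBipartiteGraph A B) c i)
          (completeBipartiteGraph A B) := by
  obtain ⟨c, hc⟩ := exists_colouring_no_monochromatic_rectangle hκ hGCH.le hA.le hB.le
  refine ⟨bipartiteEdgeColouring c, fun i ⟨F, hF⟩ => ?_⟩
  have : Nonempty A := mk_ne_zero_iff.1 (hA ▸ (aleph0_pos.trans_le hκ).ne')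
  obtain ⟨g, h, hg, hh, hFgh⟩ := ((SimpleGraph.Hom.ofLE (colourClass_le _ _ i)).comp F)
    |>.exists_injective_eq_sumMap hF (by rw [hA, hB]; exact Order.lt_succ κ)
  have hmono : ∀ a b, c (g a) (h b) = i := fun a b => by
    have hadj := F.map_adj (show (completeBipartiteGraph A B).Adj (.inl a) (.inr b) by simp)
    rwa [show ⇑F = Sum.map g h from hFgh, Sum.map_inl, Sum.map_inr,
      colourClass_bipartiteEdgeColouring_adj] at hadj
  obtain ⟨_, ⟨b, rfl⟩, _, ⟨a₁, rfl⟩, _, ⟨a₂, rfl⟩, hne⟩ :=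
    hc _ (by rw [mk_range_eq g hg, hA]) _ (by rw [mk_range_eq h hh, hB])
  exact hne ((hmono a₁ b).trans (hmono a₂ b).symm)
end

section
/- Assume that every family of at most ℵ₁ infinite subsets of ℕ with the strong finite intersection property has an infinite pseudo-intersection (i.e. ℵ₁ < 𝔭). Then Maker has a winning strategy in the Maker-Breaker game MB(K_{ω,ω₁}, K_{ω,ω₁}). -/
open Cardinal

universe u v

/-- The family `F` of subsets of `ℕ` has the strong finite intersection
property: the intersection of any finitely many members of `F` is infinite. -/
def HasSFIP (F : Set (Set ℕ)) : Prop :=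
  ∀ S : Finset (Set ℕ), ↑S ⊆ F → (⋂₀ (↑S : Set (Set ℕ))).Infinite

/-!
Maker plays in `ω₁` stages of `ω` turns each. At the start of stage `α` she picks a column
`b_α ∈ B` that nobody has touched yet (fewer than `ℵ₁` turns have passed) and an infinite set
`T_α ⊆ ℕ` of rows almost contained in all earlier secured sets `S_β` (by `ℵ₁ < 𝔭`, since these
are almost decreasing). During the stage she claims edges from `b_α` to fresh rows of `T_α`;
Breaker blocks only finitely many of them at any time, so the set `S_α ⊆ T_α` of rows she
secures is infinite. After `ω₁` stages, `ℵ₁ < 𝔭` gives an infinite `P` almost contained in every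
`S_α`; as `P \ S_α` ranges over countably many finite sets, uncountably many `S_α` contain one
and the same infinite `Q ⊆ P`, and the rows `Q` with those columns `b_α` span Maker's `K_{ω,ω₁}`.
-/

open Set
open scoped Ordinal

def AlephOneLtPseudoIntersectionNumber : Prop :=
  ∀ F : Set (Set ℕ), (∀ A ∈ F, A.Infinite) → #F ≤ ℵ₁ → HasSFIP F →
    ∃ P : Set ℕ, P.Infinite ∧ ∀ A ∈ F, (P \ A).Finite

theorem hasSFIP_image_of_almost_antitone {ι : Type*} [LinearOrder ι] {S : ι → Set ℕ}
    {s : Set ι} (hinf : ∀ i ∈ s, (S i).Infinite)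
    (hanti : ∀ i ∈ s, ∀ j ∈ s, i ≤ j → (S j \ S i).Finite) : HasSFIP (S '' s) := by
  classical
  intro F hF
  obtain ⟨J, hJs, rfl⟩ := Finset.subset_set_image_iff.mp hF
  rcases J.eq_empty_or_nonempty with rfl | hJ
  · simpa using infinite_univ
  have hm := J.max'_mem hJ
  have hfin : (⋃ j ∈ J, S (J.max' hJ) \ S j).Finite :=
    J.finite_toSet.biUnion fun j hj => hanti j (hJs hj) _ (hJs hm) (J.le_max' j hj)
  refine ((hinf _ (hJs hm)).sdiff hfin).mono ?_
  rintro n ⟨hn, hn'⟩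
  simp only [Finset.coe_image, sInter_image, mem_iInter₂, Finset.mem_coe]
  intro j hj
  by_contra hnj
  exact hn' (mem_biUnion hj ⟨hn, hnj⟩)

theorem Cardinal.mk_image_Iio_le_card {α : Type u} (f : Ordinal.{u} → α) (o : Ordinal.{u}) :
    #(f '' Iio o) ≤ o.card := by
  have := mk_image_le_lift.{u + 1, u} (f := f) (s := Iio o)
  rw [mk_Iio_ordinal, lift_lift] at this
  exact lift_le.mp this

theorem Ordinal.countable_Iio_iff {o : Ordinal.{u}} : (Iio o).Countable ↔ o < ω₁ := by
  rw [← le_aleph0_iff_set_countable, Cardinal.mk_Iio_ordinal, lift_le_aleph0,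
    lt_omega_iff_card_lt, lt_aleph_one_iff]

theorem exists_pseudoIntersection_of_almost_antitone (hp : AlephOneLtPseudoIntersectionNumber)
    {S : Ordinal.{0} → Set ℕ} {o : Ordinal.{0}} (ho : o ≤ ω₁) (hinf : ∀ β < o, (S β).Infinite)
    (hanti : ∀ β < o, ∀ γ < o, β ≤ γ → (S γ \ S β).Finite) :
    ∃ P : Set ℕ, P.Infinite ∧ ∀ β < o, (P \ S β).Finite := by
  obtain ⟨P, hP, hPS⟩ := hp (S '' Iio o) (forall_mem_image.2 hinf)
    ((mk_image_Iio_le_card S o).trans (by simpa using Ordinal.card_le_card ho))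
    (hasSFIP_image_of_almost_antitone hinf hanti)
  exact ⟨P, hP, fun β hβ => hPS _ (mem_image_of_mem S hβ)⟩

theorem exists_infinite_subset_of_not_countable {ι : Type*} {S : ι → Set ℕ} {s : Set ι}
    (hs : ¬s.Countable) {P : Set ℕ} (hP : P.Infinite) (hPS : ∀ i ∈ s, (P \ S i).Finite) :
    ∃ Q : Set ℕ, Q.Infinite ∧ ∃ t ⊆ s, ¬t.Countable ∧ ∀ i ∈ t, Q ⊆ S i := by
  obtain ⟨F, hF, hfiber⟩ : ∃ F : Set ℕ, F.Finite ∧ ¬{i ∈ s | P \ S i = F}.Countable := by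
    by_contra! h
    refine hs (((countable_ofPred_finite_subset countable_univ).biUnion
      fun F hF => h F hF.1).mono fun i hi => ?_)
    exact mem_biUnion ⟨hPS i hi, subset_univ _⟩ ⟨hi, rfl⟩
  refine ⟨P \ F, hP.sdiff hF, _, sep_subset _ _, hfiber, fun i ⟨_, hi⟩ n ⟨hnP, hnF⟩ => ?_⟩
  by_contra hn
  exact hnF (hi ▸ ⟨hnP, hn⟩)

instance Sym2.instNonempty {α : Type*} [Nonempty α] : Nonempty (Sym2 α) :=
  ⟨s(Classical.arbitrary α, Classical.arbitrary α)⟩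

theorem Sym2.mk_inl_inr_inj {α β : Type*} {a a' : α} {b b' : β} :
    s(Sum.inl a, Sum.inr b) = s(Sum.inl a', Sum.inr b') ↔ a = a' ∧ b = b' := by
  simp

theorem containsCopy_completeBipartiteGraph_of_forall_mem {A B A' B' : Type*}
    {E : Set (Sym2 (A ⊕ B))} (f : A' ↪ A) (g : B' ↪ B)
    (hE : ∀ a b, s(Sum.inl (f a), Sum.inr (g b)) ∈ E) :
    ContainsCopy (SimpleGraph.fromEdgeSet E) (completeBipartiteGraph A' B') := by
  refine ⟨⟨Sum.map f g, ?_⟩, f.injective.sumMap g.injective⟩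
  rintro (a | b) (a' | b') hadj
  · simp at hadj
  · exact ⟨hE a b', by simp⟩
  · exact (SimpleGraph.fromEdgeSet_adj _).2 ⟨Sym2.eq_swap ▸ hE a' b, by simp⟩
  · simp at hadj

theorem containsCopy_completeBipartiteGraph_of_almost_antitone
    (hp : AlephOneLtPseudoIntersectionNumber) {A B : Type} (hA : #A ≤ ℵ₀) (hB : #B ≤ ℵ₁)
    {E : Set (Sym2 (A ⊕ B))} (e : ℕ ↪ A) (col : Ordinal.{0} → B) (S : Ordinal.{0} → Set ℕ)
    (hcol : InjOn col (Iio ω₁)) (hinf : ∀ α < ω₁, (S α).Infinite)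
    (hanti : ∀ β < ω₁, ∀ α < ω₁, β ≤ α → (S α \ S β).Finite)
    (hE : ∀ α < ω₁, ∀ n ∈ S α, s(Sum.inl (e n), Sum.inr (col α)) ∈ E) :
    ContainsCopy (SimpleGraph.fromEdgeSet E) (completeBipartiteGraph A B) := by
  obtain ⟨P, hP, hPS⟩ := exists_pseudoIntersection_of_almost_antitone hp le_rfl hinf hanti
  obtain ⟨Q, hQ, t, htω, ht, hQS⟩ :=
    exists_infinite_subset_of_not_countable (Ordinal.countable_Iio_iff.not.2 (lt_irrefl _))
      hP hPS
  have : Countable A := mk_le_aleph0_iff.mp hA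
  obtain ⟨r, hr⟩ := exists_injective_nat A
  obtain ⟨c⟩ : Nonempty (B ↪ t) := by
    rw [← lift_mk_le'.{0, 1}, lift_uzero]
    refine (lift_le_aleph_one.2 hB).trans (aleph_one_le_iff.2 ?_)
    exact lt_of_not_ge (le_aleph0_iff_set_countable.not.2 ht)
  let rows : A ↪ A := (⟨r, hr⟩ : A ↪ ℕ).trans
    ((Set.Infinite.natEmbedding Q hQ).trans ((Function.Embedding.subtype Q).trans e))
  let cols : B ↪ B := ⟨fun b => col (c b), fun b b' h =>
    c.injective (Subtype.ext (hcol (htω (c b).2) (htω (c b').2) h))⟩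
  exact containsCopy_completeBipartiteGraph_of_forall_mem rows cols fun a b =>
    hE _ (htω (c b).2) _ (hQS _ (c b).2 (Set.Infinite.natEmbedding Q hQ (r a)).2)

namespace Ordinal

theorem omega0_mul_add_one_lt_omega_one {α : Ordinal} (hα : α < ω₁) : ω * (α + 1) < ω₁ :=
  isPrincipal_mul_omega 1 omega0_lt_omega_one ((isSuccLimit_omega 1).add_one_lt hα)

theorem omega0_mul_add_natCast_lt (α : Ordinal) (k : ℕ) : ω * α + k < ω * (α + 1) := by
  rw [mul_add_one, add_lt_add_iff_left]
  exact natCast_lt_omega0 k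

theorem omega0_mul_add_natCast_div (α : Ordinal) (k : ℕ) : (ω * α + k) / ω = α := by
  rw [mul_add_div _ omega0_ne_zero, div_eq_zero_of_lt (natCast_lt_omega0 k), add_zero]

theorem finite_Ico_add_natCast (γ : Ordinal) (k : ℕ) : (Ico γ (γ + k)).Finite := by
  refine ((finite_lt_nat k).image fun j : ℕ => γ + j).subset fun β ⟨hγβ, hβ⟩ => ?_
  rw [← Ordinal.add_sub_cancel_of_le hγβ, add_lt_add_iff_left] at hβ
  obtain ⟨j, hj⟩ := lt_omega0.1 (hβ.trans (natCast_lt_omega0 k))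
  refine ⟨j, by rwa [hj, Nat.cast_lt] at hβ, ?_⟩
  change γ + j = β
  rw [← hj, Ordinal.add_sub_cancel_of_le hγβ]

end Ordinal

theorem makerTurn_omega0_mul_add_two_mul (α : Ordinal) (i : ℕ) :
    makerTurn (ω * α + ↑(2 * i)) := by
  have h2 : (2 : Ordinal) * ω = ω := by
    exact_mod_cast Ordinal.natCast_mul_omega0 (n := 2) two_pos
  have : ω * α + ↑(2 * i) = 2 * (ω * α + i) := by
    rw [Ordinal.natCast_mul, Nat.cast_ofNat, mul_add, ← mul_assoc, h2]
  rw [makerTurn, this, Ordinal.mul_mod]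

namespace MBStrategy

variable {α : Type u} [Nonempty α]

noncomputable def totalHistory (γ : Ordinal.{u}) (hist : ∀ β < γ, α) : Ordinal.{u} → α :=
  fun β => if h : β < γ then hist β h else Classical.arbitrary α

/- A plan reads a position as a total function on turns, padded with junk from turn `γ` on;
this is harmless for plans that only look below `γ` (`hcausal` in `MBPlay.Follows.move_eq_plan`). -/
open Classical in
noncomputable def ofPlan (board : Set α) (plan : (Ordinal.{u} → α) → Ordinal.{u} → α) :
    MBStrategy α := fun γ hist =>
  let m := plan (totalHistory γ hist) γ
  if m ∈ board ∧ ∀ β h, hist β h ≠ m then m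
  else if hfree : ∃ e ∈ board, ∀ β h, hist β h ≠ e then hfree.choose else m

theorem isLegal_ofPlan (board : Set α) (plan : (Ordinal.{u} → α) → Ordinal.{u} → α)
    (turns : Ordinal.{u} → Prop) : (ofPlan board plan).IsLegal board turns := by
  intro γ hist _ _ _ hfree
  simp only [ofPlan]
  split_ifs with hm
  · exact hm
  · exact hfree.choose_spec

end MBStrategy

namespace MBPlay

variable {α : Type u} {board : Set α}

theorem mk_board_le_card_len (p : MBPlay board) : #board ≤ p.len.card := by
  have hsurj : Function.Surjective fun γ : Iio p.len =>
      (⟨p.move γ γ.2, p.move_mem γ γ.2⟩ : board) := fun e =>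
    let ⟨γ, hγ, he⟩ := p.complete e e.2
    ⟨⟨γ, hγ⟩, Subtype.ext he⟩
  have := lift_mk_le_lift_mk_of_surjective hsurj
  rwa [mk_Iio_ordinal, lift_lift, lift_le] at this

theorem omega_one_le_len (p : MBPlay board) (hboard : ℵ₁ ≤ #board) : ω₁ ≤ p.len := by
  rw [← ord_aleph, ord_le]
  exact hboard.trans p.mk_board_le_card_len

variable [Nonempty α]

noncomputable def history_s6 (p : MBPlay board) : Ordinal.{u} → α :=
  MBStrategy.totalHistory p.len p.move

theorem history_of_lt (p : MBPlay board) {γ : Ordinal.{u}} (hγ : γ < p.len) :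
    p.history_s6 γ = p.move γ hγ :=
  dif_pos hγ

theorem history_injOn (p : MBPlay board) : InjOn p.history_s6 (Iio p.len) := fun β hβ γ hγ h =>
  p.move_inj β hβ γ hγ (by rwa [history_of_lt p hβ, history_of_lt p hγ] at h)

theorem Follows.move_eq_plan {p : MBPlay board} {turns : Ordinal.{u} → Prop}
    {plan : (Ordinal.{u} → α) → Ordinal.{u} → α}
    (hfollow : p.Follows turns (MBStrategy.ofPlan board plan)) {γ : Ordinal.{u}}
    (hγ : γ < p.len) (hturn : turns γ)
    (hcausal : ∀ h h', EqOn h h' (Iio γ) → plan h γ = plan h' γ)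
    (hmem : plan p.history_s6 γ ∈ board) (hfresh : plan p.history_s6 γ ∉ p.history_s6 '' Iio γ) :
    p.move γ hγ = plan p.history_s6 γ := by
  have hplan : plan (MBStrategy.totalHistory γ fun β hβ => p.move β (hβ.trans hγ)) γ =
      plan p.history_s6 γ :=
    hcausal _ _ fun β hβ => by
      rw [history_of_lt p ((show β < γ from hβ).trans hγ)]
      exact dif_pos hβ
  rw [hfollow γ hγ hturn, MBStrategy.ofPlan, hplan,
    if_pos ⟨hmem, fun β hβ h => hfresh ⟨β, hβ, by rw [history_of_lt p (hβ.trans hγ), h]⟩⟩]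

end MBPlay

namespace CompleteBipartiteGame

open Ordinal

variable {A B : Type}

def claimedRows (e : ℕ ↪ A) (h : Ordinal.{0} → Sym2 (A ⊕ B)) (T : Set Ordinal.{0}) (b : B) :
    Set ℕ :=
  {n | s(Sum.inl (e n), Sum.inr b) ∈ h '' T}

def Untouched (h : Ordinal.{0} → Sym2 (A ⊕ B)) (γ : Ordinal.{0}) (b : B) : Prop :=
  ∀ a : A, s(Sum.inl a, Sum.inr b) ∉ h '' Iio γ

section

variable {e : ℕ ↪ A} {h h' : Ordinal.{0} → Sym2 (A ⊕ B)}

theorem claimedRows_congr {T : Set Ordinal.{0}} (hh : EqOn h h' T) (b : B) :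
    claimedRows e h T b = claimedRows e h' T b := by
  rw [claimedRows, claimedRows, hh.image_eq]

theorem finite_claimedRows_of_untouched {γ : Ordinal.{0}} {b : B} (hb : Untouched h γ b)
    (k : ℕ) : (claimedRows e h (Iio (γ + k)) b).Finite := by
  have hinj : Function.Injective fun n => s(Sum.inl (e n), Sum.inr b) := fun n n' hn =>
    e.injective (Sym2.mk_inl_inr_inj.1 hn).1
  refine (((finite_Ico_add_natCast γ k).image h).preimage hinj.injOn).subset ?_
  rintro n ⟨β, hβ, hβn⟩
  exact ⟨β, ⟨le_of_not_gt fun hβγ => hb (e n) ⟨β, hβγ, hβn⟩, hβ⟩, hβn⟩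

end

theorem exists_untouched (hB : ℵ₁ ≤ #B) (h : Ordinal.{0} → Sym2 (A ⊕ B)) {γ : Ordinal.{0}}
    (hγ : γ < ω₁) : ∃ b : B, Untouched h γ b := by
  by_contra! htouched
  simp only [Untouched, not_forall, not_not] at htouched
  have hcolumns (x : Sym2 (A ⊕ B)) :
      {b : B | ∃ a : A, s(Sum.inl a, Sum.inr b) = x}.Subsingleton := by
    rintro b ⟨a, rfl⟩ b' ⟨a', ha⟩
    exact (Sym2.mk_inl_inr_inj.1 ha).2.symm
  have : (univ : Set B).Countable :=
    (((countable_Iio_iff.2 hγ).image h).biUnion fun x _ => (hcolumns x).countable).mono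
      fun b _ => by
        obtain ⟨a, hab⟩ := htouched b
        exact mem_biUnion hab ⟨a, rfl⟩
  exact not_le.2 (aleph0_lt_aleph_one.trans_le hB) (mk_le_aleph0_iff.2 (countable_univ_iff.1 this))

section

variable [Nonempty A]

theorem lt_len_of_lt_omega_one (hB : ℵ₁ ≤ #B) (p : MBPlay (completeBipartiteGraph A B).edgeSet)
    {γ : Ordinal.{0}} (hγ : γ < ω₁) : γ < p.len := by
  let column_edge (b : B) : (completeBipartiteGraph A B).edgeSet :=
    ⟨s(Sum.inl (Classical.arbitrary A), Sum.inr b), by simp⟩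
  have hinj : Function.Injective column_edge := fun b b' hb =>
    (Sym2.mk_inl_inr_inj.1 (congrArg Subtype.val hb)).2
  exact hγ.trans_le (p.omega_one_le_len (hB.trans (mk_le_of_injective hinj)))

theorem lt_len_of_lt_stage_end (hB : ℵ₁ ≤ #B) (p : MBPlay (completeBipartiteGraph A B).edgeSet)
    {α γ : Ordinal.{0}} (hα : α < ω₁) (hγ : γ < ω * (α + 1)) : γ < p.len :=
  lt_len_of_lt_omega_one hB p (hγ.trans (omega0_mul_add_one_lt_omega_one hα))

end

variable [Nonempty B]

/- Stage `α` consists of the turns `ω * α + k` with `k : ℕ`; Maker's turns in it are those with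
`k` even. -/
noncomputable def column (h : Ordinal.{0} → Sym2 (A ⊕ B)) (α : Ordinal.{0}) : B :=
  Classical.epsilon fun b => Untouched h (ω * α) b

noncomputable def target (e : ℕ ↪ A) (h : Ordinal.{0} → Sym2 (A ⊕ B)) (α : Ordinal.{0}) :
    Set ℕ :=
  Classical.epsilon fun P : Set ℕ => P.Infinite ∧ ∀ β < α, (P \ (target e h β ∩
    claimedRows e h (Iio (ω * (β + 1)) ∩ {γ | makerTurn γ}) (column h β))).Finite
termination_by α

noncomputable def secured (e : ℕ ↪ A) (h : Ordinal.{0} → Sym2 (A ⊕ B)) (α : Ordinal.{0}) :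
    Set ℕ :=
  target e h α ∩ claimedRows e h (Iio (ω * (α + 1)) ∩ {γ | makerTurn γ}) (column h α)

theorem target_eq (e : ℕ ↪ A) (h : Ordinal.{0} → Sym2 (A ⊕ B)) (α : Ordinal.{0}) :
    target e h α =
      Classical.epsilon fun P : Set ℕ => P.Infinite ∧ ∀ β < α, (P \ secured e h β).Finite := by
  rw [target]
  rfl

noncomputable def makerPlan (e : ℕ ↪ A) (h : Ordinal.{0} → Sym2 (A ⊕ B)) (γ : Ordinal.{0}) :
    Sym2 (A ⊕ B) :=
  s(Sum.inl (e (Classical.epsilon fun n =>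
      n ∈ target e h (γ / ω) \ claimedRows e h (Iio γ) (column h (γ / ω)))),
    Sum.inr (column h (γ / ω)))

noncomputable def makerStrategy (e : ℕ ↪ A) : MBStrategy (Sym2 (A ⊕ B)) :=
  MBStrategy.ofPlan (completeBipartiteGraph A B).edgeSet (makerPlan e)

theorem untouched_column (hB : ℵ₁ ≤ #B) (h : Ordinal.{0} → Sym2 (A ⊕ B)) {α : Ordinal.{0}}
    (hα : α < ω₁) : Untouched h (ω * α) (column h α) :=
  Classical.epsilon_spec <| exists_untouched hB h <|
    (mul_le_mul_right le_self_add ω).trans_lt (omega0_mul_add_one_lt_omega_one hα)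

section

variable {e : ℕ ↪ A} {h h' : Ordinal.{0} → Sym2 (A ⊕ B)}

theorem column_congr {α : Ordinal.{0}} (hh : EqOn h h' (Iio (ω * α))) :
    column h α = column h' α := by
  simp only [column, Untouched, hh.image_eq]

theorem target_congr (α : Ordinal.{0}) (hh : EqOn h h' (Iio (ω * α))) :
    target e h α = target e h' α := by
  induction α using WellFoundedLT.induction with | _ α ih => ?_
  have hsecured : ∀ β < α, secured e h β = secured e h' β := fun β hβ => by
    have hle : ω * (β + 1) ≤ ω * α := mul_le_mul_right (Order.add_one_le_of_lt hβ) ω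
    have hh' : EqOn h h' (Iio (ω * β)) := hh.mono (Iio_subset_Iio (mul_le_mul_right hβ.le ω))
    rw [secured, secured, ih β hβ hh', column_congr hh',
      claimedRows_congr (hh.mono (inter_subset_left.trans (Iio_subset_Iio hle)))]
  rw [target_eq, target_eq]
  congr 1
  ext P
  exact and_congr_right fun _ => forall₂_congr fun β hβ => by rw [hsecured β hβ]

theorem makerPlan_congr {γ : Ordinal.{0}} (hh : EqOn h h' (Iio γ)) :
    makerPlan e h γ = makerPlan e h' γ := by
  have hle : EqOn h h' (Iio (ω * (γ / ω))) := hh.mono (Iio_subset_Iio (mul_div_le γ ω))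
  rw [makerPlan, makerPlan, target_congr _ hle, column_congr hle, claimedRows_congr hh]

theorem secured_diff_finite_of_target {α β : Ordinal.{0}}
    (htarget : ∀ β < α, (target e h α \ secured e h β).Finite) (hβα : β ≤ α) :
    (secured e h α \ secured e h β).Finite := by
  rcases hβα.eq_or_lt with rfl | hlt
  · simp
  · exact (htarget β hlt).subset (sdiff_subset_sdiff_left inter_subset_left)

end

variable [Nonempty A] {e : ℕ ↪ A} {p : MBPlay (completeBipartiteGraph A B).edgeSet}

theorem exists_mem_target_history_eq (hfollow : p.Follows makerTurn (makerStrategy e))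
    (hB : ℵ₁ ≤ #B) {α : Ordinal.{0}} (hα : α < ω₁) (htarget : (target e p.history_s6 α).Infinite)
    (i : ℕ) : ∃ n ∈ target e p.history_s6 α,
      p.history_s6 (ω * α + ↑(2 * i)) = s(Sum.inl (e n), Sum.inr (column p.history_s6 α)) := by
  set t := ω * α + ↑(2 * i)
  set b := column p.history_s6 α
  have ht : t < p.len := lt_len_of_lt_stage_end hB p hα (omega0_mul_add_natCast_lt α _)
  have hfree : (target e p.history_s6 α \ claimedRows e p.history_s6 (Iio t) b).Nonempty :=
    (htarget.sdiff (finite_claimedRows_of_untouched (untouched_column hB _ hα) _)).nonempty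
  have hplan : makerPlan e p.history_s6 t = s(Sum.inl (e (Classical.epsilon fun n =>
      n ∈ target e p.history_s6 α \ claimedRows e p.history_s6 (Iio t) b)), Sum.inr b) := by
    rw [makerPlan, omega0_mul_add_natCast_div]
  have hn := Classical.epsilon_spec hfree
  refine ⟨_, hn.1, ?_⟩
  rw [p.history_of_lt ht, hfollow.move_eq_plan ht (makerTurn_omega0_mul_add_two_mul α i)
    (fun _ _ hh => makerPlan_congr hh) (by rw [hplan]; simp) (by rw [hplan]; exact hn.2), hplan]

theorem secured_infinite_of_target (hfollow : p.Follows makerTurn (makerStrategy e))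
    (hB : ℵ₁ ≤ #B) {α : Ordinal.{0}} (hα : α < ω₁) (htarget : (target e p.history_s6 α).Infinite) :
    (secured e p.history_s6 α).Infinite := by
  choose n hn hturn using exists_mem_target_history_eq hfollow hB hα htarget
  have hlt (i : ℕ) : ω * α + ↑(2 * i) < ω * (α + 1) := omega0_mul_add_natCast_lt α _
  have hinj : Function.Injective n := fun i j hij => by
    have := p.history_injOn (lt_len_of_lt_stage_end hB p hα (hlt i))
      (lt_len_of_lt_stage_end hB p hα (hlt j)) ((hturn i).trans (hij ▸ (hturn j).symm))
    simpa using this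
  exact infinite_of_injective_forall_mem hinj fun i =>
    ⟨hn i, _, ⟨hlt i, makerTurn_omega0_mul_add_two_mul α i⟩, hturn i⟩

theorem target_isPseudoIntersection (hp : AlephOneLtPseudoIntersectionNumber)
    (hfollow : p.Follows makerTurn (makerStrategy e)) (hB : ℵ₁ ≤ #B) {α : Ordinal.{0}}
    (hα : α < ω₁) : (target e p.history_s6 α).Infinite ∧
      ∀ β < α, (target e p.history_s6 α \ secured e p.history_s6 β).Finite := by
  induction α using WellFoundedLT.induction with | _ α ih => ?_
  have hex := exists_pseudoIntersection_of_almost_antitone hp hα.le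
    (fun β hβ => secured_infinite_of_target hfollow hB (hβ.trans hα) (ih β hβ (hβ.trans hα)).1)
    fun β _ γ hγ hβγ => secured_diff_finite_of_target (ih γ hγ (hγ.trans hα)).2 hβγ
  rw [target_eq]
  exact Classical.epsilon_spec hex

theorem secured_infinite (hp : AlephOneLtPseudoIntersectionNumber)
    (hfollow : p.Follows makerTurn (makerStrategy e)) (hB : ℵ₁ ≤ #B) {α : Ordinal.{0}}
    (hα : α < ω₁) : (secured e p.history_s6 α).Infinite :=
  secured_infinite_of_target hfollow hB hα (target_isPseudoIntersection hp hfollow hB hα).1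

theorem secured_diff_finite (hp : AlephOneLtPseudoIntersectionNumber)
    (hfollow : p.Follows makerTurn (makerStrategy e)) (hB : ℵ₁ ≤ #B) {α β : Ordinal.{0}}
    (hα : α < ω₁) (hβα : β ≤ α) : (secured e p.history_s6 α \ secured e p.history_s6 β).Finite :=
  secured_diff_finite_of_target (target_isPseudoIntersection hp hfollow hB hα).2 hβα

theorem column_ne_of_lt (hp : AlephOneLtPseudoIntersectionNumber)
    (hfollow : p.Follows makerTurn (makerStrategy e)) (hB : ℵ₁ ≤ #B) {α β : Ordinal.{0}}
    (hβα : β < α) (hα : α < ω₁) : column p.history_s6 α ≠ column p.history_s6 β := by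
  intro hcol
  obtain ⟨n, -, γ, ⟨hγ, -⟩, hγn⟩ := (secured_infinite hp hfollow hB (hβα.trans hα)).nonempty
  have hle : ω * (β + 1) ≤ ω * α := mul_le_mul_right (Order.add_one_le_of_lt hβα) ω
  exact untouched_column hB p.history_s6 hα (e n) ⟨γ, hγ.trans_le hle, hcol ▸ hγn⟩

theorem column_injOn (hp : AlephOneLtPseudoIntersectionNumber)
    (hfollow : p.Follows makerTurn (makerStrategy e)) (hB : ℵ₁ ≤ #B) :
    InjOn (column p.history_s6) (Iio ω₁) := by
  intro β hβ α hα hβα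
  rcases lt_trichotomy β α with hlt | heq | hgt
  · exact absurd hβα.symm (column_ne_of_lt hp hfollow hB hlt hα)
  · exact heq
  · exact absurd hβα (column_ne_of_lt hp hfollow hB hgt hβ)

theorem mem_claimed_of_mem_secured (hB : ℵ₁ ≤ #B) {α : Ordinal.{0}} (hα : α < ω₁) {n : ℕ}
    (hn : n ∈ secured e p.history_s6 α) :
    s(Sum.inl (e n), Sum.inr (column p.history_s6 α)) ∈ p.claimed makerTurn := by
  obtain ⟨-, γ, ⟨hγ, hmaker⟩, hγn⟩ := hn
  have hγlen := lt_len_of_lt_stage_end hB p hα hγ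
  exact ⟨γ, hγlen, hmaker, by rw [← p.history_of_lt hγlen, hγn]⟩

end CompleteBipartiteGame

/-- Assume every family of at most `ℵ₁` infinite subsets of `ℕ`
with the strong finite intersection property has an infinite
pseudo-intersection (i.e. `ℵ₁ < 𝔭`).  Then Maker has a winning strategy in the
Maker–Breaker game `MB(K_{ω,ω₁}, K_{ω,ω₁})`. -/
theorem makerWins_completeBipartite_omega_omega1
    (hp : ∀ F : Set (Set ℕ), (∀ A ∈ F, A.Infinite) → #F ≤ Cardinal.aleph 1 → HasSFIP F →
      ∃ P : Set ℕ, P.Infinite ∧ ∀ A ∈ F, (P \ A).Finite)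
    (A B : Type) (hA : #A = ℵ₀) (hB : #B = Cardinal.aleph 1) :
    MakerWins (completeBipartiteGraph A B) (completeBipartiteGraph A B) := by
  have : Infinite A := infinite_iff.2 hA.ge
  have : Nonempty B := mk_ne_zero_iff.1 (hB ▸ (aleph_pos 1).ne')
  let e : ℕ ↪ A := Infinite.natEmbedding A
  open CompleteBipartiteGame in
  exact ⟨makerStrategy e, MBStrategy.isLegal_ofPlan _ _ _, fun p hfollow =>
    containsCopy_completeBipartiteGraph_of_almost_antitone hp hA.le hB.le e
      (column p.history_s6) (secured e p.history_s6) (column_injOn hp hfollow hB.ge)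
      (fun α hα => secured_infinite hp hfollow hB.ge hα)
      (fun β _ α hα => secured_diff_finite hp hfollow hB.ge hα)
      fun α hα n hn => mem_claimed_of_mem_secured hB.ge hα hn⟩
end

section
/- Maker has a winning strategy in the Maker-Breaker game MB(K_ω, K_ω) on the countably infinite complete graph, where her goal is to build a copy of the countably infinite complete graph. -/
open Cardinal

universe u v

/-!
Maker grows a tree on `ℕ` rooted at `0` in which every vertex is joined by her edges to all of
its ancestors. She handles one candidate vertex at a time, untouched by any edge when it is
chosen: it descends from the root, Maker claiming its edge to each node on the way, as long as
some child of the current node is still joined to it by a free edge; otherwise it settles as a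
new child of that node and a fresh candidate starts at the root. When a candidate settles below a
node whose path from the root has `L` vertices, at most `2L` edges at it have been claimed (its
`L` edges to that path and Breaker's `L` answers), and each blocked child uses one of them; so
such a node has at most `2L + 1` children. The tree is infinite because every candidate settles,
so by Kőnig's lemma it has an infinite branch, which is a clique in Maker's graph.
-/

open SimpleGraph

section Reduction

variable {α : Type u}

/-- The first `n` terms of `m`, latest first. -/
def movesBefore (m : ℕ → α) : ℕ → List α
  | 0 => []
  | n + 1 => m n :: movesBefore m n

theorem mem_movesBefore {m : ℕ → α} {n : ℕ} {e : α} :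
    e ∈ movesBefore m n ↔ ∃ i < n, m i = e := by
  induction n with
  | zero => simp [movesBefore]
  | succ n ih =>
    simp only [movesBefore, List.mem_cons, ih]
    constructor
    · rintro (rfl | ⟨i, hi, rfl⟩)
      exacts [⟨n, n.lt_succ_self, rfl⟩, ⟨i, by omega, rfl⟩]
    · rintro ⟨i, hi, rfl⟩
      rcases Nat.lt_succ_iff_lt_or_eq.mp hi with hi | rfl
      exacts [Or.inr ⟨i, hi, rfl⟩, Or.inl rfl]

theorem movesBefore_congr {m m' : ℕ → α} {n : ℕ} (h : ∀ i < n, m i = m' i) :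
    movesBefore m n = movesBefore m' n := by
  induction n with
  | zero => rfl
  | succ n ih => simp only [movesBefore, h n n.lt_succ_self, ih fun i hi => h i (by omega)]

open Classical in
noncomputable def legalize (board : Set α) (hb : board.Infinite) (g : List α → α)
    (l : List α) : α :=
  if g l ∈ board ∧ g l ∉ l then g l else (hb.exists_notMem_finite l.finite_toSet).choose

theorem legalize_spec {board : Set α} (hb : board.Infinite) (g : List α → α) (l : List α) :
    legalize board hb g l ∈ board ∧ legalize board hb g l ∉ l := by
  unfold legalize
  split_ifs with h
  · exact h
  · exact (hb.exists_notMem_finite l.finite_toSet).choose_spec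

theorem legalize_eq {board : Set α} (hb : board.Infinite) {g : List α → α} {l : List α}
    (h : g l ∈ board ∧ g l ∉ l) : legalize board hb g l = g l :=
  if_pos h

open Classical in
/-- `e₀` pads `hist` beyond `γ`, where it is never read. -/
noncomputable def MBStrategy.ofList (board : Set α) (e₀ : α) (f : List α → α) :
    MBStrategy α := fun γ hist =>
  if hγ : ∃ n : ℕ, γ = n then
    f (movesBefore (fun i => if hi : (i : Ordinal) < γ then hist i hi else e₀) hγ.choose)
  else if H : ∃ e ∈ board, ∀ β hβ, hist β hβ ≠ e then H.choose else e₀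

theorem MBStrategy.isLegal_ofList {board : Set α} (e₀ : α) {f : List α → α}
    (hf : ∀ l, f l ∈ board ∧ f l ∉ l) (turns : Ordinal.{u} → Prop) :
    (MBStrategy.ofList board e₀ f).IsLegal board turns := by
  intro γ hist _ _ _ hfree
  unfold MBStrategy.ofList
  split_ifs with hγ
  · set seq := fun i : ℕ => if hi : (i : Ordinal) < γ then hist i hi else e₀
    refine ⟨(hf (movesBefore seq hγ.choose)).1, fun β hβ heq =>
      (hf (movesBefore seq hγ.choose)).2 (mem_movesBefore.mpr ?_)⟩
    have hβn : β < hγ.choose := hγ.choose_spec ▸ hβ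
    obtain ⟨i, rfl⟩ := Ordinal.lt_omega0.mp (hβn.trans (Ordinal.natCast_lt_omega0 _))
    exact ⟨i, by exact_mod_cast hβn, by simp only [seq, dif_pos hβ, heq]⟩
  · exact hfree.choose_spec

theorem MBPlay.natCast_lt_len {board : Set α} (p : MBPlay board) (hb : board.Infinite)
    (n : ℕ) : (n : Ordinal) < p.len := by
  by_contra! hlen
  refine hb (((Set.finite_lt_nat n).biUnion fun i _ =>
    Set.Subsingleton.finite (s := {e | ∃ h, p.move i h = e}) ?_).subset fun e he => ?_)
  · rintro _ ⟨h, rfl⟩ _ ⟨h', rfl⟩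
    rfl
  · obtain ⟨γ, hγ, rfl⟩ := p.complete e he
    have hγn := hγ.trans_le hlen
    obtain ⟨i, rfl⟩ := Ordinal.lt_omega0.mp (hγn.trans (Ordinal.natCast_lt_omega0 n))
    exact Set.mem_biUnion (x := i) (by exact_mod_cast hγn) ⟨hγ, rfl⟩

theorem makerTurn_two_mul (k : ℕ) : makerTurn ((2 * k : ℕ) : Ordinal.{u}) := by
  rw [makerTurn, show (2 : Ordinal.{u}) = ((2 : ℕ) : Ordinal) from rfl, ← Ordinal.natCast_mod,
    Nat.mul_mod_right, Nat.cast_zero]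

theorem ContainsCopy.mono {V : Type u} {W : Type v} {G G' : SimpleGraph V} {H : SimpleGraph W}
    (hGG' : G ≤ G') : ContainsCopy G H → ContainsCopy G' H
  | ⟨f, hf⟩ => ⟨(Hom.ofLE hGG').comp f, hf⟩

/-- Since the board is infinite, every play lasts at least `ω` turns, and Maker's moves at the
even finite turns already contain the copy of `H`. -/
theorem makerWins_of_forall_seq {V : Type u} {W : Type v} {G : SimpleGraph V}
    {H : SimpleGraph W} (hG : G.edgeSet.Infinite) (f : List (Sym2 V) → Sym2 V)
    (hf : ∀ l, f l ∈ G.edgeSet ∧ f l ∉ l)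
    (hwin : ∀ m : ℕ → Sym2 V, (∀ k, m (2 * k) = f (movesBefore m (2 * k))) →
      ContainsCopy (fromEdgeSet (Set.range fun k => m (2 * k))) H) :
    MakerWins G H := by
  refine ⟨.ofList G.edgeSet hG.nonempty.some f, MBStrategy.isLegal_ofList _ hf _,
    fun p hp => ?_⟩
  set m : ℕ → Sym2 V := fun i => p.move i (p.natCast_lt_len hG i)
  refine (hwin m fun k => ?_).mono (fromEdgeSet_mono ?_)
  · have hn : ∃ n : ℕ, ((2 * k : ℕ) : Ordinal) = n := ⟨_, rfl⟩
    rw [show m (2 * k) = _ from hp _ _ (makerTurn_two_mul k), MBStrategy.ofList, dif_pos hn,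
      ← Nat.cast_injective hn.choose_spec]
    exact congrArg f (movesBefore_congr fun i hi => dif_pos (by exact_mod_cast hi))
  · rintro _ ⟨k, rfl⟩
    exact ⟨_, _, makerTurn_two_mul k, rfl⟩

end Reduction

section Konig

variable {α : Type*} {T : Set (List α)}

theorem exists_extension_infinite (hT : ∀ r ∈ T, ∀ q, q <+: r → q ≠ [] → q ∈ T)
    (hfin : ∀ q, {w | q ++ [w] ∈ T}.Finite) {q : List α} (hq : {r ∈ T | q <+: r}.Infinite) :
    ∃ w, {r ∈ T | q ++ [w] <+: r}.Infinite := by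
  by_contra! h
  refine hq (((Set.finite_singleton q).union ((hfin q).biUnion fun w _ => h w)).subset ?_)
  rintro r ⟨hr, s, rfl⟩
  cases s with
  | nil => simp
  | cons w s =>
    exact Or.inr <|
      Set.mem_biUnion (x := w) (hT _ hr _ ⟨s, by simp⟩ (by simp)) ⟨hr, s, by simp⟩

/-- **Kőnig's lemma** for a finitely branching tree of lists, ordered by extension. -/
theorem exists_seq_map_range_mem (hT : ∀ r ∈ T, ∀ q, q <+: r → q ≠ [] → q ∈ T)
    (hfin : ∀ q, {w | q ++ [w] ∈ T}.Finite) (hinf : T.Infinite) :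
    ∃ b : ℕ → α, ∀ n, (List.range (n + 1)).map b ∈ T := by
  let Good (q : List α) : Prop := {r ∈ T | q <+: r}.Infinite
  let next (q : Subtype Good) : α := (exists_extension_infinite hT hfin q.2).choose
  let g : ℕ → Subtype Good := fun n => Nat.rec ⟨[], by simpa [Good] using hinf⟩
    (fun _ q => ⟨q.1 ++ [next q], (exists_extension_infinite hT hfin q.2).choose_spec⟩) n
  have hg : ∀ n, (g n).1 = (List.range n).map fun i => next (g i) := by
    intro n
    induction n with
    | zero => rfl
    | succ n ih =>
      simp only [g, List.range_succ, List.map_append, List.map_singleton] at ih ⊢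
      rw [ih]
  refine ⟨fun i => next (g i), fun n => ?_⟩
  obtain ⟨r, hr, hqr⟩ := (g (n + 1)).2.nonempty
  exact hT r hr _ (hg (n + 1) ▸ hqr) (by simp)

end Konig

theorem containsCopy_top_of_forall_lt_adj {V : Type u} {G : SimpleGraph V} (b : ℕ → V)
    (hb : ∀ i j, i < j → G.Adj (b i) (b j)) : ContainsCopy G (⊤ : SimpleGraph ℕ) := by
  have hadj : ∀ i j, i ≠ j → G.Adj (b i) (b j) := fun i j hij =>
    hij.lt_or_gt.elim (hb i j) fun h => (hb j i h).symm
  exact ⟨⟨b, hadj _ _⟩, fun i j hij => by_contra fun hne => (hadj i j hne).ne hij⟩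

theorem Set.finite_iUnion_of_monotone_of_ncard_le {α : Type*} {s : ℕ → Set α}
    (hs : Monotone s) (hfin : ∀ n, (s n).Finite) {B : ℕ} (hB : ∀ n, (s n).ncard ≤ B) :
    (⋃ n, s n).Finite := by
  by_contra h
  obtain ⟨t, hts, ht⟩ := Set.Infinite.exists_subset_card_eq h (B + 1)
  obtain ⟨n, hn⟩ := hs.directed_le.exists_mem_subset_of_finset_subset_biUnion hts
  have := Set.ncard_le_ncard hn (hfin n)
  rw [Set.ncard_coe_finset] at this
  linarith [hB n]

theorem Sym2.ncard_le_countP_mem {α : Type*} [DecidableEq α] {c : α} {S : Set α}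
    {h : List (Sym2 α)} (hS : ∀ w ∈ S, s(c, w) ∈ h) : S.ncard ≤ h.countP (c ∈ ·) := by
  calc S.ncard ≤ {e | e ∈ h.filter (c ∈ ·)}.ncard :=
        Set.ncard_le_ncard_of_injOn (fun w => s(c, w)) (fun w hw => by simp [hS w hw])
          (fun _ _ _ _ he => Sym2.congr_right.mp he) (List.finite_toSet _)
    _ ≤ (h.filter (c ∈ ·)).length := by
        rw [← List.coe_toFinset, Set.ncard_coe_finset]
        exact List.toFinset_card_le _
    _ = h.countP (c ∈ ·) := List.countP_eq_length_filter.symm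

theorem edgeSet_top_infinite : (⊤ : SimpleGraph ℕ).edgeSet.Infinite :=
  Set.infinite_of_injective_forall_mem (f := fun k : ℕ => s(0, k + 1))
    (fun a b hab => by simpa using Sym2.congr_right.mp hab) (fun k => by simp)

theorem List.countP_cons_cons_le {α : Type*} (p : α → Bool) (a b : α) (l : List α) :
    (b :: a :: l).countP p ≤ l.countP p + 2 := by
  simp only [List.countP_cons]
  split_ifs <;> omega

namespace MakerTree

/-- Maker's bookkeeping. A node of the tree is stored as the list of its ancestors followed by
itself, the root being `[0]`; the candidate `cand` is joined by Maker to all vertices of the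
node `pos`. -/
structure State where
  tree : Finset (List ℕ)
  cand : ℕ
  pos : List ℕ

theorem exists_fresh (h : List (Sym2 ℕ)) (T : Finset (List ℕ)) :
    ∃ v : ℕ, (∀ e ∈ h, v ∉ e) ∧ ∀ r ∈ T, v ∉ r := by
  obtain ⟨v, hv⟩ :=
    Infinite.exists_notMem_finset (h.toFinset.biUnion Sym2.toFinset ∪ T.biUnion List.toFinset)
  simp only [Finset.mem_union, Finset.mem_biUnion, List.mem_toFinset, Sym2.mem_toFinset,
    not_or, not_exists, not_and] at hv
  exact ⟨v, hv⟩

noncomputable def fresh (h : List (Sym2 ℕ)) (T : Finset (List ℕ)) : ℕ :=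
  (exists_fresh h T).choose

theorem fresh_spec (h : List (Sym2 ℕ)) (T : Finset (List ℕ)) :
    (∀ e ∈ h, fresh h T ∉ e) ∧ ∀ r ∈ T, fresh h T ∉ r :=
  (exists_fresh h T).choose_spec

def State.descend (t : State) (w : ℕ) : State := { t with pos := t.pos ++ [w] }

noncomputable def State.settle (t : State) (h : List (Sym2 ℕ)) : State :=
  ⟨insert (t.pos ++ [t.cand]) t.tree, fresh h (insert (t.pos ++ [t.cand]) t.tree), [0]⟩

open Classical in
noncomputable def State.step (t : State) (h : List (Sym2 ℕ)) : Sym2 ℕ × State :=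
  if hw : ∃ w, t.pos ++ [w] ∈ t.tree ∧ s(t.cand, w) ∉ h then
    (s(t.cand, hw.choose), t.descend hw.choose)
  else (s((t.settle h).cand, 0), t.settle h)

namespace State

variable {t : State} {h : List (Sym2 ℕ)}

theorem step_of_exists (hw : ∃ w, t.pos ++ [w] ∈ t.tree ∧ s(t.cand, w) ∉ h) :
    t.step h = (s(t.cand, hw.choose), t.descend hw.choose) :=
  dif_pos hw

theorem step_of_not_exists (hw : ¬∃ w, t.pos ++ [w] ∈ t.tree ∧ s(t.cand, w) ∉ h) :
    t.step h = (s((t.settle h).cand, 0), t.settle h) :=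
  dif_neg hw

theorem tree_subset_step (t : State) (h : List (Sym2 ℕ)) : t.tree ⊆ (t.step h).2.tree := by
  by_cases hw : ∃ w, t.pos ++ [w] ∈ t.tree ∧ s(t.cand, w) ∉ h
  · rw [step_of_exists hw]
    exact subset_rfl
  · rw [step_of_not_exists hw]
    exact Finset.subset_insert _ _

end State

/-- Maker's state when she is to move after the moves `l`, latest first. It changes only at her
own moves, so it is computed two moves at a time. -/
noncomputable def stateAfter : List (Sym2 ℕ) → State
  | _ :: _ :: l => ((stateAfter l).step l).2
  | _ => ⟨{[0]}, 1, []⟩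

/-- The fallback of `legalize` is never used, by `Invariant.step_fst_mem`. -/
noncomputable def makerMove : List (Sym2 ℕ) → Sym2 ℕ :=
  legalize _ edgeSet_top_infinite fun l => ((stateAfter l).step l).1

/-- `C e` says that Maker claims `e`, and `h` is the history of the play so far. -/
structure Invariant (C : Sym2 ℕ → Prop) (h : List (Sym2 ℕ)) (t : State) : Prop where
  root_mem : [0] ∈ t.tree
  prefix_mem : ∀ r ∈ t.tree, ∀ q, q <+: r → q ≠ [] → q ∈ t.tree
  claimed : ∀ q v, q ++ [v] ∈ t.tree → ∀ u ∈ q, C s(v, u)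
  ncard_children_le : ∀ q, {w | q ++ [w] ∈ t.tree}.ncard ≤ 2 * q.length + 1
  pos_mem : t.pos = [] ∨ t.pos ∈ t.tree
  pos_claimed : ∀ u ∈ t.pos, C s(t.cand, u)
  cand_notMem : ∀ r ∈ t.tree, t.cand ∉ r
  countP_le : h.countP (t.cand ∈ ·) ≤ 2 * t.pos.length

variable {C : Sym2 ℕ → Prop} {h : List (Sym2 ℕ)} {t : State}

theorem invariant_init (C : Sym2 ℕ → Prop) : Invariant C [] ⟨{[0]}, 1, []⟩ where
  root_mem := Finset.mem_singleton_self _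
  prefix_mem r hr q hq hq0 := by
    rw [Finset.mem_singleton.mp hr] at hq
    rcases List.prefix_concat_iff (l₂ := []).mp hq with rfl | hq
    · exact Finset.mem_singleton_self _
    · exact absurd (List.prefix_nil.mp hq) hq0
  claimed q v hqv u hu := by
    simp only [Finset.mem_singleton, List.append_eq_singleton_iff] at hqv
    obtain ⟨rfl, -⟩ | ⟨-, hv⟩ := hqv
    exacts [absurd hu List.not_mem_nil, absurd hv (List.cons_ne_nil v [])]
  ncard_children_le q := by
    refine (Set.ncard_le_ncard (t := {0}) fun w hw => ?_).trans (by simp)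
    simp only [Set.mem_ofPred_eq, Finset.mem_singleton, List.append_eq_singleton_iff] at hw
    obtain ⟨-, hw⟩ | ⟨-, hw⟩ := hw
    exacts [List.singleton_inj.mp hw, absurd hw (List.cons_ne_nil w [])]
  pos_mem := Or.inl rfl
  pos_claimed := by simp
  cand_notMem := by simp
  countP_le := by simp

namespace Invariant

theorem descend (hI : Invariant C h t) {w : ℕ} (hw : t.pos ++ [w] ∈ t.tree)
    (hC : C s(t.cand, w)) (a b : Sym2 ℕ) : Invariant C (b :: a :: h) (t.descend w) where
  root_mem := hI.root_mem
  prefix_mem := hI.prefix_mem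
  claimed := hI.claimed
  ncard_children_le := hI.ncard_children_le
  pos_mem := Or.inr hw
  pos_claimed u hu := by
    rcases List.mem_append.mp hu with hu | hu
    · exact hI.pos_claimed u hu
    · rwa [List.mem_singleton.mp hu]
  cand_notMem := hI.cand_notMem
  countP_le := by
    change (b :: a :: h).countP (t.cand ∈ ·) ≤ 2 * (t.pos ++ [w]).length
    have := hI.countP_le
    have := List.countP_cons_cons_le (t.cand ∈ ·) a b h
    simp only [List.length_append, List.length_singleton]
    omega

theorem settle (hI : Invariant C h t)
    (hblocked : ∀ w, t.pos ++ [w] ∈ t.tree → s(t.cand, w) ∈ h)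
    (hC : C s((t.settle h).cand, 0)) (a b : Sym2 ℕ) : Invariant C (b :: a :: h) (t.settle h) where
  root_mem := Finset.mem_insert_of_mem hI.root_mem
  prefix_mem r hr q hq hq0 := by
    rcases Finset.mem_insert.mp hr with rfl | hr
    · rcases List.prefix_concat_iff.mp hq with rfl | hq
      · exact Finset.mem_insert_self _ _
      · rcases hI.pos_mem with h0 | hpos
        · exact absurd (List.prefix_nil.mp (h0 ▸ hq)) hq0
        · exact Finset.mem_insert_of_mem (hI.prefix_mem _ hpos q hq hq0)
    · exact Finset.mem_insert_of_mem (hI.prefix_mem r hr q hq hq0)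
  claimed q v hqv := by
    rcases Finset.mem_insert.mp hqv with heq | hqv
    · obtain ⟨rfl, hv⟩ := List.append_inj' heq rfl
      rw [List.singleton_inj.mp hv]
      exact hI.pos_claimed
    · exact hI.claimed q v hqv
  ncard_children_le q := by
    change {w | q ++ [w] ∈ insert (t.pos ++ [t.cand]) t.tree}.ncard ≤ _
    by_cases hq : q = t.pos
    · have hins : {w | q ++ [w] ∈ insert (t.pos ++ [t.cand]) t.tree} =
          insert t.cand {w | t.pos ++ [w] ∈ t.tree} := by
        ext w
        simp [hq]
      rw [hins, hq]
      have := Sym2.ncard_le_countP_mem (S := {w | t.pos ++ [w] ∈ t.tree}) (hblocked ·)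
      linarith [Set.ncard_insert_le t.cand {w | t.pos ++ [w] ∈ t.tree}, hI.countP_le]
    · have hsame : {w | q ++ [w] ∈ insert (t.pos ++ [t.cand]) t.tree} =
          {w | q ++ [w] ∈ t.tree} := by
        ext w
        simp only [Set.mem_ofPred_eq, Finset.mem_insert, or_iff_right_iff_imp]
        exact fun heq => absurd (List.append_inj' heq rfl).1 hq
      rw [hsame]
      exact hI.ncard_children_le q
  pos_mem := Or.inr (Finset.mem_insert_of_mem hI.root_mem)
  pos_claimed u hu := by rwa [List.mem_singleton.mp hu]
  cand_notMem := (fresh_spec h _).2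
  countP_le := by
    set c := fresh h (insert (t.pos ++ [t.cand]) t.tree)
    change (b :: a :: h).countP (c ∈ ·) ≤ 2 * [0].length
    have hzero : h.countP (c ∈ ·) = 0 :=
      List.countP_eq_zero.mpr fun e he => by simpa using (fresh_spec h _).1 e he
    have := List.countP_cons_cons_le (c ∈ ·) a b h
    simp only [List.length_singleton]
    omega

theorem step (hI : Invariant C h t) (hC : C (t.step h).1) (a b : Sym2 ℕ) :
    Invariant C (b :: a :: h) (t.step h).2 := by
  by_cases hw : ∃ w, t.pos ++ [w] ∈ t.tree ∧ s(t.cand, w) ∉ h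
  · rw [State.step_of_exists hw] at hC ⊢
    exact hI.descend hw.choose_spec.1 hC a b
  · rw [State.step_of_not_exists hw] at hC ⊢
    simp only [not_exists, not_and, not_not] at hw
    exact hI.settle hw hC a b

theorem step_fst_mem (hI : Invariant C h t) :
    (t.step h).1 ∈ (⊤ : SimpleGraph ℕ).edgeSet ∧ (t.step h).1 ∉ h := by
  by_cases hw : ∃ w, t.pos ++ [w] ∈ t.tree ∧ s(t.cand, w) ∉ h
  · rw [State.step_of_exists hw]
    obtain ⟨hmem, hfree⟩ := hw.choose_spec
    refine ⟨fun (heq : t.cand = hw.choose) => hI.cand_notMem _ hmem ?_, hfree⟩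
    exact heq ▸ List.mem_concat_self ..
  · rw [State.step_of_not_exists hw]
    obtain ⟨hh, hT⟩ := fresh_spec h (insert (t.pos ++ [t.cand]) t.tree)
    refine ⟨fun (h0 : fresh h _ = 0) => hT [0] (Finset.mem_insert_of_mem hI.root_mem) ?_,
      fun hmem => hh _ hmem (Sym2.mem_mk_left _ _)⟩
    exact List.mem_singleton.mpr h0

theorem step_snd_eq_descend_or_card_lt (hI : Invariant C h t) :
    (∃ w, (t.step h).2 = t.descend w) ∨ t.tree.card < (t.step h).2.tree.card := by
  by_cases hw : ∃ w, t.pos ++ [w] ∈ t.tree ∧ s(t.cand, w) ∉ h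
  · exact Or.inl ⟨_, by rw [State.step_of_exists hw]⟩
  · rw [State.step_of_not_exists hw]
    exact Or.inr (Finset.card_lt_card (Finset.ssubset_insert fun hmem =>
      hI.cand_notMem _ hmem (List.mem_concat_self ..)))

end Invariant

def IsMakerPlay (m : ℕ → Sym2 ℕ) : Prop :=
  ∀ k, m (2 * k) = makerMove (movesBefore m (2 * k))

section Play

variable (m : ℕ → Sym2 ℕ)

noncomputable def state (k : ℕ) : State := stateAfter (movesBefore m (2 * k))

theorem state_succ (k : ℕ) :
    state m (k + 1) = ((state m k).step (movesBefore m (2 * k))).2 :=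
  rfl

theorem monotone_state_tree : Monotone fun k => (state m k).tree :=
  monotone_nat_of_le_succ fun k => (state m k).tree_subset_step _

def limitTree : Set (List ℕ) := ⋃ k, ((state m k).tree : Set (List ℕ))

variable {m}

theorem invariant_state (hm : IsMakerPlay m) (k : ℕ) :
    Invariant (· ∈ Set.range fun k => m (2 * k)) (movesBefore m (2 * k)) (state m k) := by
  induction k with
  | zero => exact invariant_init _
  | succ k ih =>
    have hmove : m (2 * k) = ((state m k).step (movesBefore m (2 * k))).1 :=
      (hm k).trans (legalize_eq _ ih.step_fst_mem)
    rw [state_succ]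
    exact ih.step ⟨k, hmove⟩ _ _

/-- Every candidate settles eventually: while it only descends, its node `pos` gets longer than
any node of the unchanged tree. -/
theorem exists_card_tree_lt (hm : IsMakerPlay m) (K : ℕ) :
    ∃ k, (state m K).tree.card < (state m k).tree.card := by
  by_contra! hK
  have hdescend : ∀ j, (state m (K + j)).tree = (state m K).tree ∧
      j ≤ (state m (K + j)).pos.length := by
    intro j
    induction j with
    | zero => simp
    | succ j ih =>
      rw [← add_assoc, state_succ]
      rcases (invariant_state hm (K + j)).step_snd_eq_descend_or_card_lt with ⟨w, hw⟩ | hlt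
      · rw [hw]
        exact ⟨ih.1, by simpa [State.descend] using ih.2⟩
      · exact absurd (hK (K + j + 1)) (by rw [state_succ, ← ih.1]; omega)
  set L := (state m K).tree.sup List.length
  obtain ⟨htree, hlen⟩ := hdescend (L + 1)
  rcases (invariant_state hm (K + (L + 1))).pos_mem with hnil | hmem
  · simp [hnil] at hlen
  · have := Finset.le_sup (f := List.length) (htree ▸ hmem)
    omega

theorem limitTree_infinite (hm : IsMakerPlay m) : (limitTree m).Infinite := fun hfin => by
  have hunbounded : ∀ n, ∃ k, n ≤ (state m k).tree.card := by
    intro n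
    induction n with
    | zero => exact ⟨0, Nat.zero_le _⟩
    | succ n ih =>
      obtain ⟨k, hk⟩ := ih
      obtain ⟨k', hk'⟩ := exists_card_tree_lt hm k
      exact ⟨k', by omega⟩
  obtain ⟨k, hk⟩ := hunbounded ((limitTree m).ncard + 1)
  have : ((state m k).tree : Set (List ℕ)).ncard ≤ (limitTree m).ncard :=
    Set.ncard_le_ncard (Set.subset_iUnion (fun k => ((state m k).tree : Set (List ℕ))) k) hfin
  rw [Set.ncard_coe_finset] at this
  omega

theorem prefix_mem_limitTree (hm : IsMakerPlay m) :
    ∀ r ∈ limitTree m, ∀ q, q <+: r → q ≠ [] → q ∈ limitTree m := by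
  simp only [limitTree, Set.mem_iUnion, Finset.mem_coe]
  rintro r ⟨k, hr⟩ q hq hq0
  exact ⟨k, (invariant_state hm k).prefix_mem r hr q hq hq0⟩

theorem finite_children_limitTree (hm : IsMakerPlay m) (q : List ℕ) :
    {w | q ++ [w] ∈ limitTree m}.Finite := by
  have hunion : {w | q ++ [w] ∈ limitTree m} = ⋃ k, {w | q ++ [w] ∈ (state m k).tree} := by
    ext w
    simp [limitTree]
  rw [hunion]
  refine Set.finite_iUnion_of_monotone_of_ncard_le
    (fun k k' hkk' w hw => monotone_state_tree m hkk' hw)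
    (fun k => (Finset.finite_toSet _).preimage ?_)
    (fun k => (invariant_state hm k).ncard_children_le q)
  exact fun w _ w' _ hww' => List.singleton_inj.mp (List.append_cancel_left hww')

theorem adj_of_mem_limitTree (hm : IsMakerPlay m) {q : List ℕ} {u v : ℕ}
    (hqv : q ++ [v] ∈ limitTree m) (hu : u ∈ q) :
    (fromEdgeSet (Set.range fun k => m (2 * k))).Adj u v := by
  simp only [limitTree, Set.mem_iUnion, Finset.mem_coe] at hqv
  obtain ⟨k, hk⟩ := hqv
  obtain ⟨i, hi : m (2 * i) = s(v, u)⟩ := (invariant_state hm k).claimed q v hk u hu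
  have hlegal : m (2 * i) ∈ (⊤ : SimpleGraph ℕ).edgeSet := hm i ▸ (legalize_spec _ _ _).1
  rw [hi, mem_edgeSet, top_adj] at hlegal
  exact (fromEdgeSet_adj _).mpr ⟨⟨i, hi.trans (Sym2.eq_swap)⟩, hlegal.symm⟩

end Play

end MakerTree

/-- Maker has a winning strategy in the Maker–Breaker game
`MB(K_ω, K_ω)` on the countably infinite complete graph, where her goal is to
build a copy of the countably infinite complete graph. -/
theorem makerWins_complete_omega :
    MakerWins (⊤ : SimpleGraph ℕ) (⊤ : SimpleGraph ℕ) := by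
  refine makerWins_of_forall_seq edgeSet_top_infinite MakerTree.makerMove
    (legalize_spec _ _) fun m hm => ?_
  obtain ⟨b, hb⟩ := exists_seq_map_range_mem (MakerTree.prefix_mem_limitTree hm)
    (MakerTree.finite_children_limitTree hm) (MakerTree.limitTree_infinite hm)
  refine containsCopy_top_of_forall_lt_adj b fun i j hij => ?_
  refine MakerTree.adj_of_mem_limitTree hm (q := (List.range j).map b) ?_ ?_
  · simpa [List.range_succ] using hb j
  · exact List.mem_map_of_mem (List.mem_range.mpr hij)
end

section
/- Let κ be an uncountable cardinal such that every 2-colouring of [κ]² admits a monochromatic set of cardinality κ (in particular, this holds when κ is weakly compact). Then Breaker does not have a winning strategy in the Maker-Breaker game MB(K_κ, K_κ). -/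
open Cardinal

universe u v

/-!
Suppose Breaker wins with a strategy `σ`. Run two plays in which Breaker follows `σ`. In `Q`,
Maker's move at turn `δ` is Breaker's move at turn `δ + 1` of `P`; in `P`, Maker's move at turn
`δ + 1` is Breaker's move at turn `δ` of `Q`, which she can compute by replaying `Q` from the
history of `P`. Copied moves that happen to be illegal are replaced by arbitrary legal ones; the
point is that every edge Breaker claims in `P` is one Maker claims in `Q`, so Maker's edges in
`P` and in `Q` together cover `K_κ`. Colour each edge by whether Maker claimed it in `P`: a
monochromatic set of size `κ` is a copy of `K_κ` among Maker's edges of `P` or of `Q`,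
contradicting that `σ` wins both plays.
-/

namespace Ordinal

theorem mod_two_eq_zero_or_one (γ : Ordinal) : γ % 2 = 0 ∨ γ % 2 = 1 := by
  rcases (Order.lt_two_iff.mp (γ.mod_lt two_ne_zero)).lt_or_eq with h | h
  · exact Or.inl (Order.lt_one_iff.mp h)
  · exact Or.inr h

theorem add_one_mod_two_of_mod_two_eq_one {δ : Ordinal} (h : δ % 2 = 1) : (δ + 1) % 2 = 0 := by
  have : δ + 1 = 2 * (δ / 2 + 1) := by
    conv_lhs => rw [← div_add_mod δ 2, h]
    rw [mul_add, mul_one, add_assoc, one_add_one_eq_two]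
  rw [this, mul_mod]

theorem exists_eq_add_one_of_mod_two_eq_one {γ : Ordinal} (h : γ % 2 = 1) :
    ∃ δ, γ = δ + 1 ∧ δ % 2 = 0 :=
  ⟨2 * (γ / 2), by conv_lhs => rw [← div_add_mod γ 2, h], mul_mod 2 _⟩

end Ordinal

open Set

theorem injOn_of_notMem_image_Iio {ι α : Type*} [LinearOrder ι] {f : ι → α} {s : Set ι}
    (h : ∀ γ ∈ s, f γ ∉ f '' Iio γ) : InjOn f s := by
  intro a ha b hb hab
  by_contra hne
  rcases lt_or_gt_of_ne hne with hlt | hlt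
  · exact h b hb ⟨a, hlt, hab⟩
  · exact h a ha ⟨b, hlt, hab.symm⟩

namespace MBStrategy

variable {α : Type u} {B : Set α}

noncomputable def run (σ : MBStrategy α) : Ordinal.{u} → α :=
  Ordinal.lt_wf.fix σ

theorem run_eq (σ : MBStrategy α) (γ : Ordinal.{u}) : σ.run γ = σ γ fun β _ => σ.run β :=
  Ordinal.lt_wf.fix_eq σ γ

theorem run_congr {σ τ : MBStrategy α} {δ : Ordinal.{u}} (h : ∀ γ ≤ δ, σ γ = τ γ) :
    σ.run δ = τ.run δ := by
  induction δ using WellFoundedLT.induction with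
  | _ δ ih =>
    rw [run_eq, run_eq, h δ le_rfl]
    congr 1
    funext β hβ
    exact ih β hβ fun γ hγ => h γ (hγ.trans hβ.le)

section Run

variable {σ : MBStrategy α} (hσ : σ.IsLegal B fun _ => True)
include hσ

theorem run_mem_and_notMem (γ : Ordinal.{u}) (hγ : ¬ B ⊆ σ.run '' Iio γ) :
    σ.run γ ∈ B ∧ σ.run γ ∉ σ.run '' Iio γ := by
  induction γ using WellFoundedLT.induction with
  | _ γ ih =>
    have hfresh : ∀ β < γ, σ.run β ∈ B ∧ σ.run β ∉ σ.run '' Iio β := fun β hβ =>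
      ih β hβ fun hB => hγ (hB.trans (image_mono (Iio_subset_Iio hβ.le)))
    obtain ⟨e, heB, he⟩ := not_subset.mp hγ
    have hinj := injOn_of_notMem_image_Iio fun β (hβ : β < γ) => (hfresh β hβ).2
    have hL := hσ γ (fun β _ => σ.run β) trivial (fun β hβ => (hfresh β hβ).1)
      (fun _ h₁ _ h₂ => hinj h₁ h₂) ⟨e, heB, fun β hβ hβe => he ⟨β, hβ, hβe⟩⟩
    rw [← run_eq σ γ] at hL
    exact ⟨hL.1, fun ⟨β, hβ, hβe⟩ => hL.2 β hβ hβe⟩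

theorem exists_subset_run_image_Iio : ∃ γ, B ⊆ σ.run '' Iio γ := by
  by_contra! h
  exact not_injective_of_ordinal σ.run <| injOn_univ.mp <|
    injOn_of_notMem_image_Iio fun γ _ => (run_mem_and_notMem hσ γ (h γ)).2

variable (B σ) in
noncomputable def runLength : Ordinal.{u} := sInf {γ | B ⊆ σ.run '' Iio γ}

theorem subset_run_image_Iio_runLength : B ⊆ σ.run '' Iio (runLength B σ) :=
  csInf_mem (exists_subset_run_image_Iio hσ)

omit hσ in
theorem not_subset_run_image_Iio {γ : Ordinal.{u}} (hγ : γ < runLength B σ) :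
    ¬ B ⊆ σ.run '' Iio γ :=
  notMem_of_lt_csInf' hγ

theorem injOn_run : InjOn σ.run (Iio (runLength B σ)) :=
  injOn_of_notMem_image_Iio fun γ hγ =>
    (run_mem_and_notMem hσ γ (not_subset_run_image_Iio hγ)).2

noncomputable def toPlay : MBPlay B where
  len := runLength B σ
  move γ _ := σ.run γ
  move_mem γ h := (run_mem_and_notMem hσ γ (not_subset_run_image_Iio h)).1
  move_inj _ h₁ _ h₂ h := injOn_run hσ h₁ h₂ h
  complete e he := by
    obtain ⟨γ, hγ, rfl⟩ := subset_run_image_Iio_runLength hσ he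
    exact ⟨γ, hγ, rfl⟩

theorem toPlay_follows (turns : Ordinal.{u} → Prop) : (toPlay hσ).Follows turns σ :=
  fun γ _ _ => run_eq σ γ

end Run

open Classical in
noncomputable def legalize (σ : MBStrategy α) (B : Set α) : MBStrategy α := fun γ hist =>
  if σ γ hist ∈ B ∧ ∀ β h, hist β h ≠ σ γ hist then σ γ hist
  else if h : ∃ e ∈ B, ∀ β h, hist β h ≠ e then h.choose else σ γ hist

theorem legalize_isLegal (σ : MBStrategy α) (B : Set α) (turns : Ordinal.{u} → Prop) :
    (σ.legalize B).IsLegal B turns := by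
  intro γ hist _ _ _ hfree
  unfold legalize
  split_ifs with hσ
  · exact hσ
  · exact hfree.choose_spec

theorem legalize_of_mem {σ : MBStrategy α} {γ : Ordinal.{u}} {hist : ∀ β < γ, α}
    (hB : σ γ hist ∈ B) (hfresh : ∀ β h, hist β h ≠ σ γ hist) :
    σ.legalize B γ hist = σ γ hist :=
  if_pos ⟨hB, hfresh⟩

open Classical in
noncomputable def alternate (σ τ : MBStrategy α) : MBStrategy α := fun γ hist =>
  if breakerTurn γ then σ γ hist else τ γ hist

theorem alternate_of_breakerTurn (σ τ : MBStrategy α) {γ : Ordinal.{u}} (hγ : breakerTurn γ)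
    (hist : ∀ β < γ, α) : alternate σ τ γ hist = σ γ hist :=
  if_pos hγ

theorem alternate_of_makerTurn (σ τ : MBStrategy α) {γ : Ordinal.{u}} (hγ : makerTurn γ)
    (hist : ∀ β < γ, α) : alternate σ τ γ hist = τ γ hist :=
  if_neg fun h => zero_ne_one ((hγ : γ % 2 = 0).symm.trans h)

theorem alternate_isLegal {σ τ : MBStrategy α} (hσ : σ.IsLegal B breakerTurn)
    (hτ : τ.IsLegal B makerTurn) : (alternate σ τ).IsLegal B fun _ => True := by
  intro γ hist _
  rcases γ.mod_two_eq_zero_or_one with hγ | hγ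
  · rw [alternate_of_makerTurn σ τ hγ]
    exact hτ γ hist hγ
  · rw [alternate_of_breakerTurn σ τ hγ]
    exact hσ γ hist hγ

theorem alternate_toPlay_follows {σ τ : MBStrategy α}
    (h : (alternate σ τ).IsLegal B fun _ => True) : (toPlay h).Follows breakerTurn σ :=
  fun γ hγ hturn => (toPlay_follows h breakerTurn γ hγ hturn).trans
    (alternate_of_breakerTurn σ τ hturn _)

section Stealing

variable (σ : MBStrategy α) (B : Set α)

def copyNext (p : Ordinal.{u} → α) : MBStrategy α := fun δ _ => p (δ + 1)

noncomputable def copying (p : Ordinal.{u} → α) : MBStrategy α :=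
  alternate σ ((copyNext p).legalize B)

/-- At a successor turn `γ = δ + 1` this is Breaker's move at turn `δ` of the copying play
replayed from `hist`; its values at limit turns are irrelevant. -/
noncomputable def stealPrev [Nonempty α] : MBStrategy α := fun γ hist =>
  (copying σ B fun β => if h : β < γ then hist β h else Classical.arbitrary α).run
    (Ordinal.pred γ)

noncomputable def stealing [Nonempty α] : MBStrategy α :=
  alternate σ ((stealPrev σ B).legalize B)

variable {σ B}

theorem copying_isLegal (hσ : σ.IsLegal B breakerTurn) (p : Ordinal.{u} → α) :
    (copying σ B p).IsLegal B fun _ => True :=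
  alternate_isLegal hσ (legalize_isLegal _ B makerTurn)

theorem stealing_isLegal [Nonempty α] (hσ : σ.IsLegal B breakerTurn) :
    (stealing σ B).IsLegal B fun _ => True :=
  alternate_isLegal hσ (legalize_isLegal _ B makerTurn)

theorem run_copying_congr {p p' : Ordinal.{u} → α} {δ : Ordinal.{u}} (hδ : breakerTurn δ)
    (h : ∀ γ ≤ δ, p γ = p' γ) : (copying σ B p).run δ = (copying σ B p').run δ := by
  refine run_congr fun γ hγ => funext fun hist => ?_
  rcases hγ.lt_or_eq with hγ | rfl
  · unfold copying alternate legalize copyNext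
    rw [h (γ + 1) (Order.add_one_le_of_lt hγ)]
  · simp only [copying, alternate_of_breakerTurn _ _ hδ]

theorem run_stealing_add_one [Nonempty α] {β : Ordinal.{u}} (hβ : breakerTurn β)
    (hB : (copying σ B (stealing σ B).run).run β ∈ B)
    (hfresh : (copying σ B (stealing σ B).run).run β ∉ (stealing σ B).run '' Iio (β + 1)) :
    (stealing σ B).run (β + 1) = (copying σ B (stealing σ B).run).run β := by
  have hcopy : (copying σ B fun γ => if h : γ < β + 1 then (stealing σ B).run γ
      else Classical.arbitrary α).run β = (copying σ B (stealing σ B).run).run β :=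
    run_copying_congr hβ fun γ hγ => dif_pos (Order.lt_add_one_iff.mpr hγ)
  have hsteal : stealPrev σ B (β + 1) (fun γ _ => (stealing σ B).run γ)
      = (copying σ B (stealing σ B).run).run β := by
    simpa only [stealPrev, Ordinal.pred_add_one] using hcopy
  have hlegal : stealing σ B (β + 1) = (stealPrev σ B).legalize B (β + 1) :=
    funext (alternate_of_makerTurn _ _ (Ordinal.add_one_mod_two_of_mod_two_eq_one hβ))
  rw [run_eq, hlegal, legalize_of_mem (hsteal ▸ hB)
    (hsteal ▸ fun γ hγ hγβ => hfresh ⟨γ, hγ, hγβ⟩), hsteal]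

theorem exists_makerTurn_run_copying_eq [Nonempty α] (hσ : σ.IsLegal B breakerTurn)
    {γ : Ordinal.{u}} (hγ : γ < runLength B (stealing σ B)) (hturn : breakerTurn γ) :
    ∃ β < runLength B (copying σ B (stealing σ B).run), makerTurn β ∧
      (copying σ B (stealing σ B).run).run β = (stealing σ B).run γ := by
  have hP := stealing_isLegal hσ
  have hQ := copying_isLegal hσ (stealing σ B).run
  obtain ⟨δ, rfl, hδ⟩ := Ordinal.exists_eq_add_one_of_mod_two_eq_one hturn
  obtain ⟨hxB, hxfresh⟩ := run_mem_and_notMem hP (δ + 1) (not_subset_run_image_Iio hγ)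
  obtain ⟨β, hβ, hqβ⟩ := subset_run_image_Iio_runLength hQ hxB
  refine ⟨β, hβ, β.mod_two_eq_zero_or_one.resolve_right fun hβodd => ?_, hqβ⟩
  -- Had Breaker taken the edge at turn `β` of the copying play, then for `β < δ` it would
  -- be claimed by turn `β + 1` of the stealing play, and for `β > δ` Maker would have
  -- copied it at turn `δ`.
  rcases lt_or_ge β δ with hβδ | hδβ
  · have hβδ' : β + 1 < δ + 1 := by simpa using hβδ
    by_cases hclaimed :
        (copying σ B (stealing σ B).run).run β ∈ (stealing σ B).run '' Iio (β + 1)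
    · obtain ⟨β', hβ', hβ'q⟩ := hclaimed
      exact hxfresh ⟨β', (show β' < β + 1 from hβ').trans hβδ', hβ'q.trans hqβ⟩
    · have hsteal := run_stealing_add_one hβodd
        (run_mem_and_notMem hQ β (not_subset_run_image_Iio hβ)).1 hclaimed
      exact hxfresh ⟨β + 1, hβδ', hsteal.trans hqβ⟩
  · have hδβ' : δ < β := hδβ.lt_of_ne fun h => by
      rw [h] at hδ; exact zero_ne_one (hδ.symm.trans hβodd)
    have hqδ : (copying σ B (stealing σ B).run).run δ = (stealing σ B).run (δ + 1) := by
      rw [run_eq, copying, alternate_of_makerTurn _ _ hδ]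
      refine legalize_of_mem hxB fun β' hβ' hβ'q => (hβ'.trans hδβ').ne ?_
      exact injOn_run hQ (hβ'.trans (hδβ'.trans hβ)) hβ (hβ'q.trans hqβ.symm)
    exact hδβ'.ne (injOn_run hQ (hδβ'.trans hβ) hβ (hqδ.trans hqβ.symm))

theorem exists_plays_maker_claims_cover (hσ : σ.IsLegal B breakerTurn) :
    ∃ P Q : MBPlay B, P.Follows breakerTurn σ ∧ Q.Follows breakerTurn σ ∧
      B ⊆ P.claimed makerTurn ∪ Q.claimed makerTurn := by
  have : Nonempty α := ⟨σ 0 fun β h => (not_lt_zero h).elim⟩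
  have hP := stealing_isLegal hσ
  have hQ := copying_isLegal hσ (stealing σ B).run
  refine ⟨toPlay hP, toPlay hQ, alternate_toPlay_follows hP, alternate_toPlay_follows hQ,
    fun e he => ?_⟩
  obtain ⟨γ, hγ, rfl⟩ := subset_run_image_Iio_runLength hP he
  rcases γ.mod_two_eq_zero_or_one with hturn | hturn
  · exact Or.inl ⟨γ, hγ, hturn, rfl⟩
  · obtain ⟨β, hβ, hmaker, hβγ⟩ := exists_makerTurn_run_copying_eq hσ hγ hturn
    exact Or.inr ⟨β, hβ, hmaker, hβγ⟩

end Stealing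

end MBStrategy

theorem containsCopy_top_of_forall_mem {V : Type u} {X : Set (Sym2 V)} {S : Set V}
    (hS : #S = #V) (hX : ∀ x ∈ S, ∀ y ∈ S, x ≠ y → s(x, y) ∈ X) :
    ContainsCopy (SimpleGraph.fromEdgeSet X) (⊤ : SimpleGraph V) := by
  obtain ⟨f⟩ : Nonempty (V ≃ S) := Cardinal.eq.mp hS.symm
  have hinj : Function.Injective fun v => (f v : V) := Subtype.val_injective.comp f.injective
  refine ⟨⟨fun v => f v, fun {a b} hab => ?_⟩, hinj⟩
  have hne := hinj.ne ((SimpleGraph.top_adj a b).mp hab)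
  exact (SimpleGraph.fromEdgeSet_adj _).mpr ⟨hX _ (f a).2 _ (f b).2 hne, hne⟩

theorem not_breakerWins_complete_of_ramsey_general
    (κ : Cardinal.{u}) (V : Type u) (hV : #V = κ)
    (hRamsey : ∀ c : Sym2 V → Bool, ∃ (S : Set V) (i : Bool), #S = κ ∧
      ∀ x ∈ S, ∀ y ∈ S, x ≠ y → c s(x, y) = i) :
    ¬ BreakerWins (⊤ : SimpleGraph V) (⊤ : SimpleGraph V) := by
  classical
  rintro ⟨σ, hσ, hwin⟩
  obtain ⟨P, Q, hP, hQ, hcover⟩ := MBStrategy.exists_plays_maker_claims_cover hσ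
  obtain ⟨S, i, hS, hmono⟩ := hRamsey fun e => decide (e ∈ P.claimed makerTurn)
  rw [← hV] at hS
  cases i
  · refine hwin Q hQ (containsCopy_top_of_forall_mem hS fun x hx y hy hxy => ?_)
    exact (hcover hxy).resolve_left (by simpa using hmono x hx y hy hxy)
  · exact hwin P hP (containsCopy_top_of_forall_mem hS fun x hx y hy hxy => by
      simpa using hmono x hx y hy hxy)

/-- Let `κ` be an uncountable cardinal such that every
`2`-colouring of the pairs from a set of size `κ` admits a monochromatic set of
cardinality `κ` (in particular this holds when `κ` is weakly compact).  Then
Breaker does not have a winning strategy in the Maker–Breaker game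
`MB(K_κ, K_κ)`. -/
theorem not_breakerWins_complete_of_ramsey
    (κ : Cardinal.{u}) (hκ : ℵ₀ < κ) (V : Type u) (hV : #V = κ)
    (hRamsey : ∀ c : Sym2 V → Bool, ∃ (S : Set V) (i : Bool), #S = κ ∧
      ∀ x ∈ S, ∀ y ∈ S, x ≠ y → c s(x, y) = i) :
    ¬ BreakerWins (⊤ : SimpleGraph V) (⊤ : SimpleGraph V) :=
  not_breakerWins_complete_of_ramsey_general κ V hV hRamsey
end
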